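/- arXiv:2202.07227 — 11 statements merged into one kernel-verified Lean document; each statement's English description precedes it below -/
import Mathlib

section
/- Let k be a field and let A, B, P, Q ∈ SL_2(k). Then t_{PBAQ} = t_{PQ}·t_{AB} − t_{PQ}·t_A·t_B + t_A·t_{PBQ} + t_B·t_{PAQ} − t_{PABQ}. -/
/-- The trace of an element of `SL₂(k)`, viewed as a matrix. -/
def trSL {k : Type*} [CommRing k] (M : Matrix.SpecialLinearGroup (Fin 2) k) : k :=
  Matrix.trace (M : Matrix (Fin 2) (Fin 2) k)

/-- For `A, B, P, Q ∈ SL₂(k)`,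
`t_{PBAQ} = t_{PQ} t_{AB} − t_{PQ} t_A t_B + t_A t_{PBQ} + t_B t_{PAQ} − t_{PABQ}`. -/
theorem trace_PBAQ {k : Type*} [Field k] (A B P Q : Matrix.SpecialLinearGroup (Fin 2) k) :
    trSL (P * B * A * Q) =
      trSL (P * Q) * trSL (A * B) - trSL (P * Q) * trSL A * trSL B
        + trSL A * trSL (P * B * Q) + trSL B * trSL (P * A * Q) - trSL (P * A * B * Q) := by
  have hA := A.2
  have hB := B.2
  have hP := P.2
  have hQ := Q.2
  rw [Matrix.det_fin_two] at hA hB hP hQ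
  simp only [trSL, Matrix.trace, Matrix.SpecialLinearGroup.coe_mul, Matrix.mul_apply,
    Fin.sum_univ_two, Matrix.diag_apply]
  ring_nf
end

section
/- Let k be an algebraically closed field. For every triple (x, y, z) ∈ k³ there exist matrices A, B ∈ SL_2(k) with t_A = x, t_B = y and t_{AB} = z. -/
namespace Matrix.SpecialLinearGroup

variable {R : Type*} [CommRing R]

def companion (x : R) : SpecialLinearGroup (Fin 2) R :=
  ⟨!![x, -1; 1, 0], by simp [det_fin_two_of]⟩

def antidiag (u : Rˣ) (y : R) : SpecialLinearGroup (Fin 2) R :=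
  ⟨!![0, (u : R); -(u⁻¹ : Rˣ), y], by simp [det_fin_two_of]⟩

theorem trSL_companion (x : R) : trSL (companion x) = x := by
  simp [trSL, companion, trace_fin_two_of]

theorem trSL_antidiag (u : Rˣ) (y : R) : trSL (antidiag u y) = y := by
  simp [trSL, antidiag, trace_fin_two_of]

theorem trSL_companion_mul_antidiag (x : R) (u : Rˣ) (y : R) :
    trSL (companion x * antidiag u y) = u + (u⁻¹ : Rˣ) := by
  change trace (!![x, -1; 1, 0] * !![0, (u : R); -(u⁻¹ : Rˣ), y]) = _
  rw [mul_fin_two, trace_fin_two_of]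
  simp [add_comm]

end Matrix.SpecialLinearGroup

theorem IsAlgClosed.exists_unit_add_inv_eq {k : Type*} [Field k] [IsAlgClosed k] (z : k) :
    ∃ u : kˣ, (u : k) + (u⁻¹ : kˣ) = z := by
  open Polynomial in
  obtain ⟨b, hb⟩ := IsAlgClosed.exists_root (X ^ 2 - C z * X + 1 : k[X])
    (by rw [show (X ^ 2 - C z * X + 1 : k[X]).degree = 2 by compute_degree!]; decide)
  replace hb : b ^ 2 - z * b + 1 = 0 := by simpa using hb
  have hb0 : b ≠ 0 := by
    rintro rfl
    simp at hb
  refine ⟨Units.mk0 b hb0, ?_⟩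
  simp only [Units.val_inv_eq_inv_val, Units.val_mk0]
  field_simp
  linear_combination hb

/-- Over an algebraically closed field, every triple `(x, y, z)` is realized as
`(t_A, t_B, t_{AB})` for some `A, B ∈ SL₂(k)`. -/
theorem surjective_trace_triple {k : Type*} [Field k] [IsAlgClosed k] (x y z : k) :
    ∃ A B : Matrix.SpecialLinearGroup (Fin 2) k,
      trSL A = x ∧ trSL B = y ∧ trSL (A * B) = z := by
  obtain ⟨u, hu⟩ := IsAlgClosed.exists_unit_add_inv_eq z
  open Matrix.SpecialLinearGroup in
  exact ⟨companion x, antidiag u y, trSL_companion x, trSL_antidiag u y,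
    (trSL_companion_mul_antidiag x u y).trans hu⟩
end

section
/- Let k be a field and let A, B, C ∈ SL_2(k). Then t_{ABC}² = (t_A·t_{BC} + t_B·t_{AC} + t_C·t_{AB} − t_A·t_B·t_C)·t_{ABC} − t_A² − t_B² − t_C² + t_A·t_B·t_{AB} + t_A·t_C·t_{AC} + t_B·t_C·t_{BC} − t_{AB}² − t_{AC}² − t_{BC}² − t_{AB}·t_{AC}·t_{BC} + 4. -/
open scoped MatrixGroups commutatorElement

section
variable {R : Type*} [CommRing R]

theorem coe_inv_eq_trSL_smul_one_sub (X : SL(2, R)) :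
    ((X⁻¹ : SL(2, R)) : Matrix (Fin 2) (Fin 2) R) = trSL X • 1 - X := by
  rw [Matrix.SpecialLinearGroup.coe_inv, Matrix.adjugate_fin_two, trSL, Matrix.trace_fin_two]
  ext i j
  fin_cases i <;> fin_cases j <;> simp

theorem trSL_mul_comm (X Y : SL(2, R)) : trSL (X * Y) = trSL (Y * X) :=
  Matrix.trace_mul_comm _ _

theorem trSL_conj (g X : SL(2, R)) : trSL (g * X * g⁻¹) = trSL X := by
  rw [trSL_mul_comm, inv_mul_cancel_left]

theorem trSL_one : trSL (1 : SL(2, R)) = 2 := by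
  simp [trSL]

theorem trSL_inv_mul (X Y : SL(2, R)) : trSL (X⁻¹ * Y) = trSL X * trSL Y - trSL (X * Y) := by
  simp only [trSL, Matrix.SpecialLinearGroup.coe_mul, coe_inv_eq_trSL_smul_one_sub, sub_mul,
    smul_mul_assoc, one_mul, Matrix.trace_sub, Matrix.trace_smul, smul_eq_mul]

theorem trSL_inv (X : SL(2, R)) : trSL X⁻¹ = trSL X := by
  simpa [trSL_one, mul_two] using trSL_inv_mul X 1

theorem trSL_mul_self (X : SL(2, R)) : trSL (X * X) = trSL X ^ 2 - 2 := by
  have h := trSL_inv_mul X X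
  rw [inv_mul_cancel, trSL_one] at h
  linear_combination h

theorem trSL_mul_mul_mul_mul (X Y Z : SL(2, R)) :
    trSL (X * Y * X * Z) = trSL (X * Y) * trSL (X * Z) - trSL (Y⁻¹ * Z) := by
  have h := trSL_inv_mul (X * Y) (X * Z)
  rw [show (X * Y)⁻¹ * (X * Z) = Y⁻¹ * Z by group, ← mul_assoc] at h
  linear_combination h

theorem trSL_commutatorElement (X Y : SL(2, R)) :
    trSL ⁅X, Y⁆ = trSL X ^ 2 + trSL Y ^ 2 + trSL (X * Y) ^ 2
      - trSL X * trSL Y * trSL (X * Y) - 2 := by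
  have h₁ : trSL ⁅X, Y⁆ = trSL X ^ 2 - trSL (X⁻¹ * Y * X⁻¹ * Y⁻¹) := by
    have h := trSL_inv_mul X⁻¹ (Y * X⁻¹ * Y⁻¹)
    rw [inv_inv, trSL_inv, trSL_conj, trSL_inv] at h
    simp only [commutatorElement_def, mul_assoc] at h ⊢
    linear_combination h
  have h₂ := trSL_mul_mul_mul_mul X⁻¹ Y Y⁻¹
  rw [← mul_inv_rev, trSL_inv, trSL_mul_comm Y, trSL_inv_mul, trSL_mul_self, trSL_inv] at h₂
  linear_combination h₁ - h₂

theorem trSL_mul_mul_add_trSL_mul_mul (A B C : SL(2, R)) :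
    trSL (A * B * C) + trSL (A * C * B) = trSL A * trSL (B * C) + trSL B * trSL (A * C)
      + trSL C * trSL (A * B) - trSL A * trSL B * trSL C := by
  have hA : trSL (A⁻¹ * (B * C)) = trSL A * trSL (B * C) - trSL (A * B * C) := by
    rw [trSL_inv_mul, mul_assoc]
  have hB : trSL (B⁻¹ * (A * C)) = trSL B * trSL (A * C) - trSL (A * C * B) := by
    rw [trSL_inv_mul, trSL_mul_comm B]
  have hC : trSL (A⁻¹ * (B * C)) =
      trSL C * (trSL A * trSL B - trSL (A * B)) - trSL (B⁻¹ * (A * C)) := by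
    rw [← trSL_inv, show (A⁻¹ * (B * C))⁻¹ = C⁻¹ * (B⁻¹ * A) by group, trSL_inv_mul,
      trSL_inv_mul, trSL_mul_comm B A, trSL_mul_comm C, mul_assoc]
    ring
  linear_combination hA - hC + hB

theorem trSL_mul_mul_mul_trSL_mul_mul (A B C : SL(2, R)) :
    trSL (A * B * C) * trSL (A * C * B) = trSL A ^ 2 + trSL B ^ 2 + trSL C ^ 2
      - trSL A * trSL B * trSL (A * B) - trSL A * trSL C * trSL (A * C)
      - trSL B * trSL C * trSL (B * C)
      + trSL (A * B) ^ 2 + trSL (A * C) ^ 2 + trSL (B * C) ^ 2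
      + trSL (A * B) * trSL (A * C) * trSL (B * C) - 4 := by
  have hcomm : trSL ((A * B * C)⁻¹ * (A * C * B)) =
      trSL B ^ 2 + trSL C ^ 2 + trSL (B * C) ^ 2 - trSL B * trSL C * trSL (B * C) - 2 := by
    rw [show (A * B * C)⁻¹ * (A * C * B) = ⁅C⁻¹, B⁻¹⁆ by rw [commutatorElement_def]; group,
      trSL_commutatorElement, ← mul_inv_rev, trSL_inv, trSL_inv, trSL_inv]
    ring
  have hword : trSL (A * B * C * (A * C * B)) =
      trSL (A * B) * trSL (A * C) * trSL (B * C) - trSL A * trSL C * trSL (A * C)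
        + trSL (A * C) ^ 2 - trSL A * trSL B * trSL (A * B) + trSL (A * B) ^ 2
        + trSL A ^ 2 - 2 := by
    -- rotate the word to `CAC · BAB`, then reduce `CAC · BAB`, `BAB · C` and `BAB · A⁻¹`
    rw [show A * B * C * (A * C * B) = A * B * (C * A * C * B) by group, trSL_mul_comm,
      show C * A * C * B * (A * B) = C * A * C * (B * A * B) by group,
      trSL_mul_mul_mul_mul, trSL_mul_comm C (B * A * B), trSL_mul_comm A⁻¹, trSL_mul_mul_mul_mul,
      trSL_mul_mul_mul_mul, trSL_mul_comm B A⁻¹, trSL_inv_mul, trSL_inv_mul, trSL_mul_self,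
      trSL_inv, trSL_mul_comm C A, trSL_mul_comm B A]
    ring
  linear_combination -trSL_inv_mul (A * B * C) (A * C * B) + hcomm + hword
end

/-- The fundamental quadratic relation satisfied by `t_{ABC}` for `A, B, C ∈ SL₂(k)`. -/
theorem trace_ABC_sq {k : Type*} [Field k] (A B C : Matrix.SpecialLinearGroup (Fin 2) k) :
    trSL (A * B * C) ^ 2 =
      (trSL A * trSL (B * C) + trSL B * trSL (A * C) + trSL C * trSL (A * B)
          - trSL A * trSL B * trSL C) * trSL (A * B * C)
        - trSL A ^ 2 - trSL B ^ 2 - trSL C ^ 2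
        + trSL A * trSL B * trSL (A * B) + trSL A * trSL C * trSL (A * C)
        + trSL B * trSL C * trSL (B * C)
        - trSL (A * B) ^ 2 - trSL (A * C) ^ 2 - trSL (B * C) ^ 2
        - trSL (A * B) * trSL (A * C) * trSL (B * C) + 4 := by
  linear_combination trSL (A * B * C) * trSL_mul_mul_add_trSL_mul_mul A B C
    - trSL_mul_mul_mul_trSL_mul_mul A B C
end

section
/- Let k be an algebraically closed field. For every (x, y, z, u, v, w, P) ∈ k⁷ satisfying P² = (w·z + v·y + u·x − x·y·z)·P − x² − y² − z² + u·y·z + v·x·z + w·x·y − u·v·w − u² − v² − w² + 4, there exist A, B, C ∈ SL_2(k) with t_A = x, t_B = y, t_C = z, t_{BC} = u, t_{AC} = v, t_{AB} = w and t_{ABC} = P. -/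
/-!
For `A, B ∈ SL₂` and an arbitrary `2 × 2` matrix `C`, the traces satisfy
`frickePoly x y z u v w P = κ · (1 - det C)` with `κ = tr [A, B] - 2`, so triples in `SL₂` lie on
the hypersurface. If `κ ≠ 0`, the linear map `C ↦ (tr C, tr BC, tr AC, tr ABC)` is injective
(two matrices with the same image have the same determinant after every translation), hence
bijective, and the preimage of `(z, u, v, P)` has determinant one. If `κ = 0`, the pair is realized
by upper triangular `A, B` whose free off-diagonal entries fit `tr AC` and `tr BC`; then `tr ABC`
is one root of the hypersurface equation in `P`, and transposing the triple gives the other root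
`tr ACB`.
-/

open Matrix

section Fricke

variable {R : Type*} [CommRing R]

def frickePoly (x y z u v w P : R) : R :=
  P ^ 2 - (w * z + v * y + u * x - x * y * z) * P
    + x ^ 2 + y ^ 2 + z ^ 2 - u * y * z - v * x * z - w * x * y
    + u * v * w + u ^ 2 + v ^ 2 + w ^ 2 - 4

/-- `kappa (tr A) (tr B) (tr AB) = tr (A B A⁻¹ B⁻¹) - 2` for `A, B ∈ SL₂`. -/
def kappa (x y w : R) : R := x ^ 2 + y ^ 2 + w ^ 2 - x * y * w - 4

theorem Matrix.trace_mul_mul_add_trace_mul_mul_fin_two (A B C : Matrix (Fin 2) (Fin 2) R) :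
    (A * B * C).trace + (A * C * B).trace = A.trace * (B * C).trace + B.trace * (A * C).trace
      + C.trace * (A * B).trace - A.trace * B.trace * C.trace := by
  rw [A.eta_fin_two, B.eta_fin_two, C.eta_fin_two]
  simp only [mul_fin_two, trace_fin_two_of]
  ring

theorem frickePoly_trace_eq_kappa_mul {A B : Matrix (Fin 2) (Fin 2) R} (hA : A.det = 1)
    (hB : B.det = 1) (C : Matrix (Fin 2) (Fin 2) R) :
    frickePoly A.trace B.trace C.trace (B * C).trace (A * C).trace (A * B).trace (A * B * C).trace
      = kappa A.trace B.trace (A * B).trace * (1 - C.det) := by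
  set x := A.trace; set y := B.trace; set z := C.trace
  set u := (B * C).trace; set v := (A * C).trace; set w := (A * B).trace
  set P := (A * B * C).trace
  -- the Fricke relation made homogeneous of degree two in each of `A`, `B`, `C`
  have homogeneous : P ^ 2 - (w * z + v * y + u * x - x * y * z) * P
      + x ^ 2 * B.det * C.det + y ^ 2 * A.det * C.det + z ^ 2 * A.det * B.det
      - u * y * z * A.det - v * x * z * B.det - w * x * y * C.det + u * v * w
      + u ^ 2 * A.det + v ^ 2 * B.det + w ^ 2 * C.det - 4 * A.det * B.det * C.det = 0 := by
    simp only [x, y, z, u, v, w, P]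
    rw [A.eta_fin_two, B.eta_fin_two, C.eta_fin_two]
    simp only [mul_fin_two, trace_fin_two_of, det_fin_two_of]
    ring
  unfold frickePoly kappa
  linear_combination homogeneous
    - (y ^ 2 * C.det + z ^ 2 - u * y * z + u ^ 2 - 4 * C.det) * hA
    - (x ^ 2 * C.det + z ^ 2 * A.det - v * x * z + v ^ 2 - 4 * C.det * A.det) * hB

theorem Matrix.eq_zero_of_forall_det_add_eq_fin_two {C : Matrix (Fin 2) (Fin 2) R}
    (h : ∀ D, (C + D).det = D.det) : C = 0 := by
  have h00 := h !![0, 0; 0, 1]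
  have h11 := h !![1, 0; 0, 0]
  have h01 := h !![0, 0; 1, 0]
  have h10 := h !![0, 1; 0, 0]
  have hC := h 0
  simp [det_fin_two] at h00 h11 h01 h10 hC
  ext i j
  fin_cases i <;> fin_cases j <;> simp only [Fin.zero_eta, Fin.mk_one, zero_apply]
  · linear_combination h00 - hC
  · linear_combination hC - h01
  · linear_combination hC - h10
  · linear_combination h11 - hC

end Fricke

section LinearAlgebra

variable {k : Type*} [Field k]

theorem eq_zero_of_trace_mul_eq_zero {A B C : Matrix (Fin 2) (Fin 2) k} (hA : A.det = 1)
    (hB : B.det = 1) (hκ : kappa A.trace B.trace (A * B).trace ≠ 0) (hz : C.trace = 0)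
    (hu : (B * C).trace = 0) (hv : (A * C).trace = 0) (hP : (A * B * C).trace = 0) :
    C = 0 := by
  refine eq_zero_of_forall_det_add_eq_fin_two fun D => ?_
  have key := frickePoly_trace_eq_kappa_mul hA hB (C + D)
  simp only [mul_add, trace_add, hz, hu, hv, hP, zero_add,
    frickePoly_trace_eq_kappa_mul hA hB D] at key
  simpa [sub_eq_zero, eq_comm] using mul_left_cancel₀ hκ key

theorem exists_trace_mul_eq {A B : Matrix (Fin 2) (Fin 2) k} (hA : A.det = 1) (hB : B.det = 1)
    (hκ : kappa A.trace B.trace (A * B).trace ≠ 0) (z u v P : k) :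
    ∃ C : Matrix (Fin 2) (Fin 2) k,
      C.trace = z ∧ (B * C).trace = u ∧ (A * C).trace = v ∧ (A * B * C).trace = P := by
  let L : Matrix (Fin 2) (Fin 2) k →ₗ[k] Fin 4 → k :=
    LinearMap.pi fun i => traceLinearMap (Fin 2) k k ∘ₗ LinearMap.mulLeft k (![1, B, A, A * B] i)
  have hL (C) : L C = ![C.trace, (B * C).trace, (A * C).trace, (A * B * C).trace] := by
    ext i
    fin_cases i <;> simp [L, mul_assoc]
  have hinj : Function.Injective L := by
    refine (injective_iff_map_eq_zero L).mpr fun C hC => ?_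
    rw [hL] at hC
    exact eq_zero_of_trace_mul_eq_zero hA hB hκ
      (congr_fun hC 0) (congr_fun hC 1) (congr_fun hC 2) (congr_fun hC 3)
  have hsurj : Function.Surjective L :=
    (LinearMap.injective_iff_surjective_of_finrank_eq_finrank
      (by simp [Module.finrank_matrix])).mp hinj
  obtain ⟨C, hC⟩ := hsurj ![z, u, v, P]
  rw [hL] at hC
  exact ⟨C, congr_fun hC 0, congr_fun hC 1, congr_fun hC 2, congr_fun hC 3⟩

end LinearAlgebra

theorem IsAlgClosed.exists_add_inv_eq {k : Type*} [Field k] [IsAlgClosed k] (s : k) :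
    ∃ r : k, r ≠ 0 ∧ r + r⁻¹ = s := by
  open Polynomial in
  obtain ⟨r, hr⟩ := IsAlgClosed.exists_root (C 1 * X ^ 2 + C (-s) * X + C 1)
    (by rw [degree_quadratic one_ne_zero]; decide)
  simp only [IsRoot, eval_add, eval_mul, eval_pow, eval_C, eval_X] at hr
  have hr0 : r ≠ 0 := by
    rintro rfl
    simp at hr
  refine ⟨r, hr0, ?_⟩
  field_simp
  linear_combination hr

section SpecialLinearGroup

open Matrix.SpecialLinearGroup
open scoped MatrixGroups

variable {k : Type*} [Field k]

theorem kappa_add_inv_eq_mul (a t w : k) (ha : a ≠ 0) (ht : t ≠ 0) :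
    kappa (a + a⁻¹) (t + t⁻¹) w
      = (w - (a * t + (a * t)⁻¹)) * (w - (a * t⁻¹ + (a * t⁻¹)⁻¹)) := by
  unfold kappa
  field_simp
  ring

theorem exists_add_inv_of_kappa_eq_zero [IsAlgClosed k] {x y w : k} (hκ : kappa x y w = 0) :
    ∃ a t : k, a ≠ 0 ∧ t ≠ 0 ∧ a + a⁻¹ = x ∧ t + t⁻¹ = y ∧ a * t + (a * t)⁻¹ = w := by
  obtain ⟨a, ha0, rfl⟩ := IsAlgClosed.exists_add_inv_eq x
  obtain ⟨t, ht0, rfl⟩ := IsAlgClosed.exists_add_inv_eq y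
  rw [kappa_add_inv_eq_mul a t w ha0 ht0, mul_eq_zero, sub_eq_zero, sub_eq_zero] at hκ
  rcases hκ with hw | hw
  · exact ⟨a, t, ha0, ht0, rfl, rfl, hw.symm⟩
  · exact ⟨a, t⁻¹, ha0, inv_ne_zero ht0, rfl, by rw [inv_inv, add_comm], hw.symm⟩

theorem exists_SL_trSL_pair [IsAlgClosed k] (x y w : k) :
    ∃ A B : SL(2, k), trSL A = x ∧ trSL B = y ∧ trSL (A * B) = w := by
  obtain ⟨b, hb0, hb⟩ := IsAlgClosed.exists_add_inv_eq w
  obtain ⟨A, hA⟩ : ∃ A : SL(2, k), ↑A = !![x, -1; 1, 0] := ⟨⟨_, by simp⟩, rfl⟩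
  obtain ⟨B, hB⟩ : ∃ B : SL(2, k), ↑B = !![0, b; -b⁻¹, y] := ⟨⟨_, by simp [hb0]⟩, rfl⟩
  refine ⟨A, B, ?_, ?_, ?_⟩ <;> simp [trSL, hA, hB, ← hb, add_comm]

theorem exists_SL_trSL_triple_of_kappa_ne_zero [IsAlgClosed k] {x y z u v w P : k}
    (hκ : kappa x y w ≠ 0) (hP : frickePoly x y z u v w P = 0) :
    ∃ A B C : SL(2, k), trSL A = x ∧ trSL B = y ∧ trSL C = z ∧
      trSL (B * C) = u ∧ trSL (A * C) = v ∧ trSL (A * B) = w ∧ trSL (A * B * C) = P := by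
  obtain ⟨A, B, rfl, rfl, rfl⟩ := exists_SL_trSL_pair x y w
  obtain ⟨C, rfl, rfl, rfl, rfl⟩ := exists_trace_mul_eq A.det_coe B.det_coe hκ z u v P
  have hC : C.det = 1 := by
    have key := frickePoly_trace_eq_kappa_mul A.det_coe B.det_coe C
    simp only [trSL, coe_mul] at hP hκ key
    rw [hP, eq_comm, mul_eq_zero, sub_eq_zero] at key
    exact (key.resolve_left hκ).symm
  exact ⟨A, B, ⟨C, hC⟩, rfl, rfl, rfl, rfl, rfl, rfl, rfl⟩

theorem exists_SL_trSL_triple_of_kappa_eq_zero [IsAlgClosed k] {x y w : k}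
    (hκ : kappa x y w = 0) (z u v : k) :
    ∃ A B C : SL(2, k), trSL A = x ∧ trSL B = y ∧ trSL C = z ∧
      trSL (B * C) = u ∧ trSL (A * C) = v ∧ trSL (A * B) = w := by
  obtain ⟨a, t, ha0, ht0, rfl, rfl, rfl⟩ := exists_add_inv_of_kappa_eq_zero hκ
  obtain ⟨A, hA⟩ : ∃ A : SL(2, k), ↑A = !![a, v - a * z; 0, a⁻¹] := ⟨⟨_, by simp [ha0]⟩, rfl⟩
  obtain ⟨B, hB⟩ : ∃ B : SL(2, k), ↑B = !![t, u - t * z; 0, t⁻¹] := ⟨⟨_, by simp [ht0]⟩, rfl⟩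
  obtain ⟨C, hC⟩ : ∃ C : SL(2, k), ↑C = !![z, -1; 1, 0] := ⟨⟨_, by simp⟩, rfl⟩
  refine ⟨A, B, C, ?_, ?_, ?_, ?_, ?_, ?_⟩ <;> simp [trSL, hA, hB, hC, mul_comm]

theorem exists_SL_trSL_triple_of_frickePoly {x y z u v w P : k} (A B C : SL(2, k))
    (hx : trSL A = x) (hy : trSL B = y) (hz : trSL C = z) (hu : trSL (B * C) = u)
    (hv : trSL (A * C) = v) (hw : trSL (A * B) = w) (hP : frickePoly x y z u v w P = 0) :
    ∃ A B C : SL(2, k), trSL A = x ∧ trSL B = y ∧ trSL C = z ∧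
      trSL (B * C) = u ∧ trSL (A * C) = v ∧ trSL (A * B) = w ∧ trSL (A * B * C) = P := by
  have hABC := frickePoly_trace_eq_kappa_mul A.det_coe B.det_coe C
  have hACB := trace_mul_mul_add_trace_mul_mul_fin_two (A : Matrix (Fin 2) (Fin 2) k) B C
  simp only [trSL, coe_mul] at hx hy hz hu hv hw ⊢
  rw [C.det_coe, sub_self, mul_zero, hx, hy, hz, hu, hv, hw] at hABC
  rw [hx, hy, hz, hu, hv, hw] at hACB
  have hroots : (P - (A * B * C : Matrix (Fin 2) (Fin 2) k).trace)
      * (P - (A * C * B : Matrix (Fin 2) (Fin 2) k).trace) = 0 := by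
    unfold frickePoly at hP hABC
    linear_combination hP - hABC - (P - (A * B * C : Matrix (Fin 2) (Fin 2) k).trace) * hACB
  rcases mul_eq_zero.mp hroots with hP | hP <;> rw [sub_eq_zero] at hP
  · exact ⟨A, B, C, hx, hy, hz, hu, hv, hw, hP.symm⟩
  · refine ⟨A.transpose, B.transpose, C.transpose, ?_, ?_, ?_, ?_, ?_, ?_, ?_⟩ <;>
      simp only [coe_transpose, ← transpose_mul, trace_transpose]
    · exact hx
    · exact hy
    · exact hz
    · rwa [trace_mul_comm]
    · rwa [trace_mul_comm]
    · rwa [trace_mul_comm]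
    · rw [hP, ← mul_assoc, trace_mul_cycle]

end SpecialLinearGroup

/-- Over an algebraically closed field, every point of the hypersurface
`P² = (wz + vy + ux − xyz)P − x² − y² − z² + uyz + vxz + wxy − uvw − u² − v² − w² + 4`
is realized by a triple of matrices in `SL₂(k)`. -/
theorem surjective_onto_hypersurface {k : Type*} [Field k] [IsAlgClosed k]
    (x y z u v w P : k)
    (h : P ^ 2 = (w * z + v * y + u * x - x * y * z) * P
        - x ^ 2 - y ^ 2 - z ^ 2 + u * y * z + v * x * z + w * x * y
        - u * v * w - u ^ 2 - v ^ 2 - w ^ 2 + 4) :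
    ∃ A B C : Matrix.SpecialLinearGroup (Fin 2) k,
      trSL A = x ∧ trSL B = y ∧ trSL C = z ∧
      trSL (B * C) = u ∧ trSL (A * C) = v ∧ trSL (A * B) = w ∧
      trSL (A * B * C) = P := by
  have hP : frickePoly x y z u v w P = 0 := by
    unfold frickePoly
    linear_combination h
  by_cases hκ : kappa x y w = 0
  · obtain ⟨A, B, C, hx, hy, hz, hu, hv, hw⟩ := exists_SL_trSL_triple_of_kappa_eq_zero hκ z u v
    exact exists_SL_trSL_triple_of_frickePoly A B C hx hy hz hu hv hw hP
  · exact exists_SL_trSL_triple_of_kappa_ne_zero hκ hP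
end

section
/- Let k be a field and let A, B, C, D ∈ SL_2(k). Then 2·t_{ABCD} = t_A·t_{BCD} + t_B·t_{ACD} + t_C·t_{ABD} + t_D·t_{ABC} + t_{AD}·t_{BC} − t_{AC}·t_{BD} + t_{AB}·t_{CD} − t_{AD}·t_B·t_C − t_{BC}·t_A·t_D − t_{AB}·t_C·t_D − t_{CD}·t_A·t_B + t_A·t_B·t_C·t_D. -/
/-- For `A, B, C, D ∈ SL₂(k)`, twice the trace of `ABCD` is expressed by traces of
products of at most three of the matrices. -/
theorem trace_ABCD {k : Type*} [Field k] (A B C D : Matrix.SpecialLinearGroup (Fin 2) k) :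
    2 * trSL (A * B * C * D) =
      trSL A * trSL (B * C * D) + trSL B * trSL (A * C * D) + trSL C * trSL (A * B * D)
        + trSL D * trSL (A * B * C)
        + trSL (A * D) * trSL (B * C) - trSL (A * C) * trSL (B * D)
        + trSL (A * B) * trSL (C * D)
        - trSL (A * D) * trSL B * trSL C - trSL (B * C) * trSL A * trSL D
        - trSL (A * B) * trSL C * trSL D - trSL (C * D) * trSL A * trSL B
        + trSL A * trSL B * trSL C * trSL D := by
  simp only [trSL, Matrix.SpecialLinearGroup.coe_mul, Matrix.trace_fin_two,
    Matrix.mul_apply, Fin.sum_univ_two]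
  ring
end

section
/- Let k be an algebraically closed field. There exists a polynomial Q in ten variables X_1, …, X_10 over k which has positive degree in the last variable X_10, such that for all A, B, C, D ∈ SL_2(k) one has Q(t_A, t_B, t_C, t_D, t_{AB}, t_{AC}, t_{BC}, t_{AD}, t_{BD}, t_{CD}) = 0. -/
private lemma vecten0 {α : Type*} (x0 x1 x2 x3 x4 x5 x6 x7 x8 x9 : α) :
    (![x0,x1,x2,x3,x4,x5,x6,x7,x8,x9] : Fin 10 → α) (0 : Fin 10) = x0 := rfl
private lemma vecten1 {α : Type*} (x0 x1 x2 x3 x4 x5 x6 x7 x8 x9 : α) :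
    (![x0,x1,x2,x3,x4,x5,x6,x7,x8,x9] : Fin 10 → α) (1 : Fin 10) = x1 := rfl
private lemma vecten2 {α : Type*} (x0 x1 x2 x3 x4 x5 x6 x7 x8 x9 : α) :
    (![x0,x1,x2,x3,x4,x5,x6,x7,x8,x9] : Fin 10 → α) (2 : Fin 10) = x2 := rfl
private lemma vecten3 {α : Type*} (x0 x1 x2 x3 x4 x5 x6 x7 x8 x9 : α) :
    (![x0,x1,x2,x3,x4,x5,x6,x7,x8,x9] : Fin 10 → α) (3 : Fin 10) = x3 := rfl
private lemma vecten4 {α : Type*} (x0 x1 x2 x3 x4 x5 x6 x7 x8 x9 : α) :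
    (![x0,x1,x2,x3,x4,x5,x6,x7,x8,x9] : Fin 10 → α) (4 : Fin 10) = x4 := rfl
private lemma vecten5 {α : Type*} (x0 x1 x2 x3 x4 x5 x6 x7 x8 x9 : α) :
    (![x0,x1,x2,x3,x4,x5,x6,x7,x8,x9] : Fin 10 → α) (5 : Fin 10) = x5 := rfl
private lemma vecten6 {α : Type*} (x0 x1 x2 x3 x4 x5 x6 x7 x8 x9 : α) :
    (![x0,x1,x2,x3,x4,x5,x6,x7,x8,x9] : Fin 10 → α) (6 : Fin 10) = x6 := rfl
private lemma vecten7 {α : Type*} (x0 x1 x2 x3 x4 x5 x6 x7 x8 x9 : α) :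
    (![x0,x1,x2,x3,x4,x5,x6,x7,x8,x9] : Fin 10 → α) (7 : Fin 10) = x7 := rfl
private lemma vecten8 {α : Type*} (x0 x1 x2 x3 x4 x5 x6 x7 x8 x9 : α) :
    (![x0,x1,x2,x3,x4,x5,x6,x7,x8,x9] : Fin 10 → α) (8 : Fin 10) = x8 := rfl
private lemma vecten9 {α : Type*} (x0 x1 x2 x3 x4 x5 x6 x7 x8 x9 : α) :
    (![x0,x1,x2,x3,x4,x5,x6,x7,x8,x9] : Fin 10 → α) (9 : Fin 10) = x9 := rfl

private noncomputable def Qc0 (k : Type*) [CommRing k] : MvPolynomial (Fin 10) k :=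
    MvPolynomial.C (16 : k) +
    MvPolynomial.C (-4 : k) * MvPolynomial.X 9 ^ 2 +
    MvPolynomial.C (-4 : k) * MvPolynomial.X 8 ^ 2 +
    MvPolynomial.C (-4 : k) * MvPolynomial.X 7 ^ 2 +
    MvPolynomial.C (-4 : k) * MvPolynomial.X 6 * MvPolynomial.X 8 * MvPolynomial.X 9 +
    MvPolynomial.C (-4 : k) * MvPolynomial.X 6 ^ 2 +
    MvPolynomial.C (1 : k) * MvPolynomial.X 6 ^ 2 * MvPolynomial.X 7 ^ 2 +
    MvPolynomial.C (-4 : k) * MvPolynomial.X 5 * MvPolynomial.X 7 * MvPolynomial.X 9 +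
    MvPolynomial.C (-2 : k) * MvPolynomial.X 5 * MvPolynomial.X 6 * MvPolynomial.X 7 * MvPolynomial.X 8 +
    MvPolynomial.C (-4 : k) * MvPolynomial.X 5 ^ 2 +
    MvPolynomial.C (1 : k) * MvPolynomial.X 5 ^ 2 * MvPolynomial.X 8 ^ 2 +
    MvPolynomial.C (-4 : k) * MvPolynomial.X 4 * MvPolynomial.X 7 * MvPolynomial.X 8
private noncomputable def Qc1 (k : Type*) [CommRing k] : MvPolynomial (Fin 10) k :=
    MvPolynomial.C (-2 : k) * MvPolynomial.X 4 * MvPolynomial.X 6 * MvPolynomial.X 7 * MvPolynomial.X 9 +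
    MvPolynomial.C (-2 : k) * MvPolynomial.X 4 * MvPolynomial.X 5 * MvPolynomial.X 8 * MvPolynomial.X 9 +
    MvPolynomial.C (-4 : k) * MvPolynomial.X 4 * MvPolynomial.X 5 * MvPolynomial.X 6 +
    MvPolynomial.C (-4 : k) * MvPolynomial.X 4 ^ 2 +
    MvPolynomial.C (1 : k) * MvPolynomial.X 4 ^ 2 * MvPolynomial.X 9 ^ 2 +
    MvPolynomial.C (-4 : k) * MvPolynomial.X 3 ^ 2 +
    MvPolynomial.C (1 : k) * MvPolynomial.X 3 ^ 2 * MvPolynomial.X 6 ^ 2 +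
    MvPolynomial.C (1 : k) * MvPolynomial.X 3 ^ 2 * MvPolynomial.X 5 ^ 2 +
    MvPolynomial.C (1 : k) * MvPolynomial.X 3 ^ 2 * MvPolynomial.X 4 * MvPolynomial.X 5 * MvPolynomial.X 6 +
    MvPolynomial.C (1 : k) * MvPolynomial.X 3 ^ 2 * MvPolynomial.X 4 ^ 2 +
    MvPolynomial.C (4 : k) * MvPolynomial.X 2 * MvPolynomial.X 3 * MvPolynomial.X 9 +
    MvPolynomial.C (2 : k) * MvPolynomial.X 2 * MvPolynomial.X 3 * MvPolynomial.X 6 * MvPolynomial.X 8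
private noncomputable def Qc2 (k : Type*) [CommRing k] : MvPolynomial (Fin 10) k :=
    MvPolynomial.C (2 : k) * MvPolynomial.X 2 * MvPolynomial.X 3 * MvPolynomial.X 5 * MvPolynomial.X 7 +
    MvPolynomial.C (1 : k) * MvPolynomial.X 2 * MvPolynomial.X 3 * MvPolynomial.X 4 * MvPolynomial.X 6 * MvPolynomial.X 7 +
    MvPolynomial.C (1 : k) * MvPolynomial.X 2 * MvPolynomial.X 3 * MvPolynomial.X 4 * MvPolynomial.X 5 * MvPolynomial.X 8 +
    MvPolynomial.C (-1 : k) * MvPolynomial.X 2 * MvPolynomial.X 3 * MvPolynomial.X 4 ^ 2 * MvPolynomial.X 9 +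
    MvPolynomial.C (-4 : k) * MvPolynomial.X 2 ^ 2 +
    MvPolynomial.C (1 : k) * MvPolynomial.X 2 ^ 2 * MvPolynomial.X 8 ^ 2 +
    MvPolynomial.C (1 : k) * MvPolynomial.X 2 ^ 2 * MvPolynomial.X 7 ^ 2 +
    MvPolynomial.C (1 : k) * MvPolynomial.X 2 ^ 2 * MvPolynomial.X 4 * MvPolynomial.X 7 * MvPolynomial.X 8 +
    MvPolynomial.C (1 : k) * MvPolynomial.X 2 ^ 2 * MvPolynomial.X 4 ^ 2 +
    MvPolynomial.C (4 : k) * MvPolynomial.X 1 * MvPolynomial.X 3 * MvPolynomial.X 8 +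
    MvPolynomial.C (2 : k) * MvPolynomial.X 1 * MvPolynomial.X 3 * MvPolynomial.X 6 * MvPolynomial.X 9 +
    MvPolynomial.C (1 : k) * MvPolynomial.X 1 * MvPolynomial.X 3 * MvPolynomial.X 5 * MvPolynomial.X 6 * MvPolynomial.X 7
private noncomputable def Qc3 (k : Type*) [CommRing k] : MvPolynomial (Fin 10) k :=
    MvPolynomial.C (-1 : k) * MvPolynomial.X 1 * MvPolynomial.X 3 * MvPolynomial.X 5 ^ 2 * MvPolynomial.X 8 +
    MvPolynomial.C (2 : k) * MvPolynomial.X 1 * MvPolynomial.X 3 * MvPolynomial.X 4 * MvPolynomial.X 7 +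
    MvPolynomial.C (1 : k) * MvPolynomial.X 1 * MvPolynomial.X 3 * MvPolynomial.X 4 * MvPolynomial.X 5 * MvPolynomial.X 9 +
    MvPolynomial.C (2 : k) * MvPolynomial.X 1 * MvPolynomial.X 2 * MvPolynomial.X 8 * MvPolynomial.X 9 +
    MvPolynomial.C (4 : k) * MvPolynomial.X 1 * MvPolynomial.X 2 * MvPolynomial.X 6 +
    MvPolynomial.C (-1 : k) * MvPolynomial.X 1 * MvPolynomial.X 2 * MvPolynomial.X 6 * MvPolynomial.X 7 ^ 2 +
    MvPolynomial.C (1 : k) * MvPolynomial.X 1 * MvPolynomial.X 2 * MvPolynomial.X 5 * MvPolynomial.X 7 * MvPolynomial.X 8 +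
    MvPolynomial.C (1 : k) * MvPolynomial.X 1 * MvPolynomial.X 2 * MvPolynomial.X 4 * MvPolynomial.X 7 * MvPolynomial.X 9 +
    MvPolynomial.C (2 : k) * MvPolynomial.X 1 * MvPolynomial.X 2 * MvPolynomial.X 4 * MvPolynomial.X 5 +
    MvPolynomial.C (-2 : k) * MvPolynomial.X 1 * MvPolynomial.X 2 * MvPolynomial.X 3 ^ 2 * MvPolynomial.X 6 +
    MvPolynomial.C (-1 : k) * MvPolynomial.X 1 * MvPolynomial.X 2 * MvPolynomial.X 3 ^ 2 * MvPolynomial.X 4 * MvPolynomial.X 5 +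
    MvPolynomial.C (-2 : k) * MvPolynomial.X 1 * MvPolynomial.X 2 ^ 2 * MvPolynomial.X 3 * MvPolynomial.X 8
private noncomputable def Qc4 (k : Type*) [CommRing k] : MvPolynomial (Fin 10) k :=
    MvPolynomial.C (-1 : k) * MvPolynomial.X 1 * MvPolynomial.X 2 ^ 2 * MvPolynomial.X 3 * MvPolynomial.X 4 * MvPolynomial.X 7 +
    MvPolynomial.C (-4 : k) * MvPolynomial.X 1 ^ 2 +
    MvPolynomial.C (1 : k) * MvPolynomial.X 1 ^ 2 * MvPolynomial.X 9 ^ 2 +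
    MvPolynomial.C (1 : k) * MvPolynomial.X 1 ^ 2 * MvPolynomial.X 7 ^ 2 +
    MvPolynomial.C (1 : k) * MvPolynomial.X 1 ^ 2 * MvPolynomial.X 5 * MvPolynomial.X 7 * MvPolynomial.X 9 +
    MvPolynomial.C (1 : k) * MvPolynomial.X 1 ^ 2 * MvPolynomial.X 5 ^ 2 +
    MvPolynomial.C (-2 : k) * MvPolynomial.X 1 ^ 2 * MvPolynomial.X 2 * MvPolynomial.X 3 * MvPolynomial.X 9 +
    MvPolynomial.C (-1 : k) * MvPolynomial.X 1 ^ 2 * MvPolynomial.X 2 * MvPolynomial.X 3 * MvPolynomial.X 5 * MvPolynomial.X 7 +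
    MvPolynomial.C (1 : k) * MvPolynomial.X 1 ^ 2 * MvPolynomial.X 2 ^ 2 * MvPolynomial.X 3 ^ 2 +
    MvPolynomial.C (4 : k) * MvPolynomial.X 0 * MvPolynomial.X 3 * MvPolynomial.X 7 +
    MvPolynomial.C (-1 : k) * MvPolynomial.X 0 * MvPolynomial.X 3 * MvPolynomial.X 6 ^ 2 * MvPolynomial.X 7 +
    MvPolynomial.C (2 : k) * MvPolynomial.X 0 * MvPolynomial.X 3 * MvPolynomial.X 5 * MvPolynomial.X 9
private noncomputable def Qc5 (k : Type*) [CommRing k] : MvPolynomial (Fin 10) k :=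
    MvPolynomial.C (1 : k) * MvPolynomial.X 0 * MvPolynomial.X 3 * MvPolynomial.X 5 * MvPolynomial.X 6 * MvPolynomial.X 8 +
    MvPolynomial.C (2 : k) * MvPolynomial.X 0 * MvPolynomial.X 3 * MvPolynomial.X 4 * MvPolynomial.X 8 +
    MvPolynomial.C (1 : k) * MvPolynomial.X 0 * MvPolynomial.X 3 * MvPolynomial.X 4 * MvPolynomial.X 6 * MvPolynomial.X 9 +
    MvPolynomial.C (2 : k) * MvPolynomial.X 0 * MvPolynomial.X 2 * MvPolynomial.X 7 * MvPolynomial.X 9 +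
    MvPolynomial.C (1 : k) * MvPolynomial.X 0 * MvPolynomial.X 2 * MvPolynomial.X 6 * MvPolynomial.X 7 * MvPolynomial.X 8 +
    MvPolynomial.C (4 : k) * MvPolynomial.X 0 * MvPolynomial.X 2 * MvPolynomial.X 5 +
    MvPolynomial.C (-1 : k) * MvPolynomial.X 0 * MvPolynomial.X 2 * MvPolynomial.X 5 * MvPolynomial.X 8 ^ 2 +
    MvPolynomial.C (1 : k) * MvPolynomial.X 0 * MvPolynomial.X 2 * MvPolynomial.X 4 * MvPolynomial.X 8 * MvPolynomial.X 9 +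
    MvPolynomial.C (2 : k) * MvPolynomial.X 0 * MvPolynomial.X 2 * MvPolynomial.X 4 * MvPolynomial.X 6 +
    MvPolynomial.C (-2 : k) * MvPolynomial.X 0 * MvPolynomial.X 2 * MvPolynomial.X 3 ^ 2 * MvPolynomial.X 5 +
    MvPolynomial.C (-1 : k) * MvPolynomial.X 0 * MvPolynomial.X 2 * MvPolynomial.X 3 ^ 2 * MvPolynomial.X 4 * MvPolynomial.X 6 +
    MvPolynomial.C (-2 : k) * MvPolynomial.X 0 * MvPolynomial.X 2 ^ 2 * MvPolynomial.X 3 * MvPolynomial.X 7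
private noncomputable def Qc6 (k : Type*) [CommRing k] : MvPolynomial (Fin 10) k :=
    MvPolynomial.C (-1 : k) * MvPolynomial.X 0 * MvPolynomial.X 2 ^ 2 * MvPolynomial.X 3 * MvPolynomial.X 4 * MvPolynomial.X 8 +
    MvPolynomial.C (2 : k) * MvPolynomial.X 0 * MvPolynomial.X 1 * MvPolynomial.X 7 * MvPolynomial.X 8 +
    MvPolynomial.C (1 : k) * MvPolynomial.X 0 * MvPolynomial.X 1 * MvPolynomial.X 6 * MvPolynomial.X 7 * MvPolynomial.X 9 +
    MvPolynomial.C (1 : k) * MvPolynomial.X 0 * MvPolynomial.X 1 * MvPolynomial.X 5 * MvPolynomial.X 8 * MvPolynomial.X 9 +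
    MvPolynomial.C (2 : k) * MvPolynomial.X 0 * MvPolynomial.X 1 * MvPolynomial.X 5 * MvPolynomial.X 6 +
    MvPolynomial.C (4 : k) * MvPolynomial.X 0 * MvPolynomial.X 1 * MvPolynomial.X 4 +
    MvPolynomial.C (-1 : k) * MvPolynomial.X 0 * MvPolynomial.X 1 * MvPolynomial.X 4 * MvPolynomial.X 9 ^ 2 +
    MvPolynomial.C (-1 : k) * MvPolynomial.X 0 * MvPolynomial.X 1 * MvPolynomial.X 3 ^ 2 * MvPolynomial.X 5 * MvPolynomial.X 6 +
    MvPolynomial.C (-2 : k) * MvPolynomial.X 0 * MvPolynomial.X 1 * MvPolynomial.X 3 ^ 2 * MvPolynomial.X 4 +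
    MvPolynomial.C (-1 : k) * MvPolynomial.X 0 * MvPolynomial.X 1 * MvPolynomial.X 2 ^ 2 * MvPolynomial.X 7 * MvPolynomial.X 8 +
    MvPolynomial.C (-2 : k) * MvPolynomial.X 0 * MvPolynomial.X 1 * MvPolynomial.X 2 ^ 2 * MvPolynomial.X 4 +
    MvPolynomial.C (1 : k) * MvPolynomial.X 0 * MvPolynomial.X 1 * MvPolynomial.X 2 ^ 2 * MvPolynomial.X 3 ^ 2 * MvPolynomial.X 4
private noncomputable def Qc7 (k : Type*) [CommRing k] : MvPolynomial (Fin 10) k :=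
    MvPolynomial.C (-2 : k) * MvPolynomial.X 0 * MvPolynomial.X 1 ^ 2 * MvPolynomial.X 3 * MvPolynomial.X 7 +
    MvPolynomial.C (-1 : k) * MvPolynomial.X 0 * MvPolynomial.X 1 ^ 2 * MvPolynomial.X 3 * MvPolynomial.X 5 * MvPolynomial.X 9 +
    MvPolynomial.C (-1 : k) * MvPolynomial.X 0 * MvPolynomial.X 1 ^ 2 * MvPolynomial.X 2 * MvPolynomial.X 7 * MvPolynomial.X 9 +
    MvPolynomial.C (-2 : k) * MvPolynomial.X 0 * MvPolynomial.X 1 ^ 2 * MvPolynomial.X 2 * MvPolynomial.X 5 +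
    MvPolynomial.C (1 : k) * MvPolynomial.X 0 * MvPolynomial.X 1 ^ 2 * MvPolynomial.X 2 * MvPolynomial.X 3 ^ 2 * MvPolynomial.X 5 +
    MvPolynomial.C (1 : k) * MvPolynomial.X 0 * MvPolynomial.X 1 ^ 2 * MvPolynomial.X 2 ^ 2 * MvPolynomial.X 3 * MvPolynomial.X 7 +
    MvPolynomial.C (-4 : k) * MvPolynomial.X 0 ^ 2 +
    MvPolynomial.C (1 : k) * MvPolynomial.X 0 ^ 2 * MvPolynomial.X 9 ^ 2 +
    MvPolynomial.C (1 : k) * MvPolynomial.X 0 ^ 2 * MvPolynomial.X 8 ^ 2 +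
    MvPolynomial.C (1 : k) * MvPolynomial.X 0 ^ 2 * MvPolynomial.X 6 * MvPolynomial.X 8 * MvPolynomial.X 9 +
    MvPolynomial.C (1 : k) * MvPolynomial.X 0 ^ 2 * MvPolynomial.X 6 ^ 2 +
    MvPolynomial.C (-2 : k) * MvPolynomial.X 0 ^ 2 * MvPolynomial.X 2 * MvPolynomial.X 3 * MvPolynomial.X 9
private noncomputable def Qc8 (k : Type*) [CommRing k] : MvPolynomial (Fin 10) k :=
    MvPolynomial.C (-1 : k) * MvPolynomial.X 0 ^ 2 * MvPolynomial.X 2 * MvPolynomial.X 3 * MvPolynomial.X 6 * MvPolynomial.X 8 +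
    MvPolynomial.C (1 : k) * MvPolynomial.X 0 ^ 2 * MvPolynomial.X 2 ^ 2 * MvPolynomial.X 3 ^ 2 +
    MvPolynomial.C (-2 : k) * MvPolynomial.X 0 ^ 2 * MvPolynomial.X 1 * MvPolynomial.X 3 * MvPolynomial.X 8 +
    MvPolynomial.C (-1 : k) * MvPolynomial.X 0 ^ 2 * MvPolynomial.X 1 * MvPolynomial.X 3 * MvPolynomial.X 6 * MvPolynomial.X 9 +
    MvPolynomial.C (-1 : k) * MvPolynomial.X 0 ^ 2 * MvPolynomial.X 1 * MvPolynomial.X 2 * MvPolynomial.X 8 * MvPolynomial.X 9 +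
    MvPolynomial.C (-2 : k) * MvPolynomial.X 0 ^ 2 * MvPolynomial.X 1 * MvPolynomial.X 2 * MvPolynomial.X 6 +
    MvPolynomial.C (1 : k) * MvPolynomial.X 0 ^ 2 * MvPolynomial.X 1 * MvPolynomial.X 2 * MvPolynomial.X 3 ^ 2 * MvPolynomial.X 6 +
    MvPolynomial.C (1 : k) * MvPolynomial.X 0 ^ 2 * MvPolynomial.X 1 * MvPolynomial.X 2 ^ 2 * MvPolynomial.X 3 * MvPolynomial.X 8 +
    MvPolynomial.C (1 : k) * MvPolynomial.X 0 ^ 2 * MvPolynomial.X 1 ^ 2 * MvPolynomial.X 3 ^ 2 +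
    MvPolynomial.C (1 : k) * MvPolynomial.X 0 ^ 2 * MvPolynomial.X 1 ^ 2 * MvPolynomial.X 2 * MvPolynomial.X 3 * MvPolynomial.X 9 +
    MvPolynomial.C (1 : k) * MvPolynomial.X 0 ^ 2 * MvPolynomial.X 1 ^ 2 * MvPolynomial.X 2 ^ 2 +
    MvPolynomial.C (-1 : k) * MvPolynomial.X 0 ^ 2 * MvPolynomial.X 1 ^ 2 * MvPolynomial.X 2 ^ 2 * MvPolynomial.X 3 ^ 2

/-- Half of the Gram determinant of `1, A, B, C, D` with respect to the bilinear form
`⟨X, Y⟩ = tr X · tr Y - tr (X·Y)` on 2×2 matrices, expanded as an explicit polynomial. -/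
private noncomputable def Qpoly (k : Type*) [CommRing k] : MvPolynomial (Fin 10) k :=
    Qc0 k + Qc1 k + Qc2 k + Qc3 k + Qc4 k + Qc5 k + Qc6 k + Qc7 k + Qc8 k

private lemma natDegree_eval₂_le {k : Type*} [CommRing k] (g : Fin 10 → Polynomial k)
    (h : ∀ i, i ≠ 9 → (g i).natDegree = 0) (h9 : (g 9).natDegree ≤ 1)
    (Q : MvPolynomial (Fin 10) k) :
    (MvPolynomial.eval₂ Polynomial.C g Q).natDegree ≤ Q.degreeOf 9 := by
  rw [MvPolynomial.eval₂_eq, MvPolynomial.degreeOf_eq_sup]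
  apply Polynomial.natDegree_sum_le_of_forall_le
  intro d hd
  refine le_trans (Polynomial.natDegree_mul_le) (le_trans ?_ (Finset.le_sup hd))
  rw [Polynomial.natDegree_C]
  simp only [Nat.zero_add]
  refine le_trans (Polynomial.natDegree_prod_le _ _) ?_
  calc ∑ i ∈ d.support, ((g i) ^ d i).natDegree
      ≤ ∑ i ∈ d.support, (if i = 9 then d i else 0) := by
        apply Finset.sum_le_sum
        intro i _
        refine le_trans (Polynomial.natDegree_pow_le) ?_
        by_cases hi : i = 9
        · subst hi; simpa using Nat.mul_le_mul_left (d 9) h9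
        · simp [hi, h i hi]
    _ ≤ d 9 := by
        rw [Finset.sum_ite_eq' d.support 9 (fun i => d i)]
        split <;> simp

set_option maxHeartbeats 4000000 in
/-- There is a polynomial relation, of positive degree in the last variable, satisfied by
the ten traces `t_A, t_B, t_C, t_D, t_{AB}, t_{AC}, t_{BC}, t_{AD}, t_{BD}, t_{CD}`
for all `A, B, C, D ∈ SL₂(k)`. -/
theorem exists_polynomial_relation {k : Type*} [Field k] [IsAlgClosed k] :
    ∃ Q : MvPolynomial (Fin 10) k, 0 < Q.degreeOf (9 : Fin 10) ∧
      ∀ A B C D : Matrix.SpecialLinearGroup (Fin 2) k,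
        MvPolynomial.eval
          ![trSL A, trSL B, trSL C, trSL D,
            trSL (A * B), trSL (A * C), trSL (B * C),
            trSL (A * D), trSL (B * D), trSL (C * D)] Q = 0 := by
  refine ⟨Qpoly k, ?_, ?_⟩
  · have key : MvPolynomial.eval₂ Polynomial.C
        (![1,0,0,0,-2,0,0,0,0,Polynomial.X] : Fin 10 → Polynomial k) (Qpoly k)
        = Polynomial.X ^ 2 - Polynomial.C 4 := by
      simp only [Qpoly, Qc0, Qc1, Qc2, Qc3, Qc4, Qc5, Qc6, Qc7, Qc8, MvPolynomial.eval₂_add, MvPolynomial.eval₂_mul,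
        MvPolynomial.eval₂_pow, MvPolynomial.eval₂_C, MvPolynomial.eval₂_X,
        vecten0, vecten1, vecten2, vecten3, vecten4, vecten5, vecten6, vecten7, vecten8, vecten9]
      simp only [map_ofNat, map_one, map_neg]
      ring
    have hle := natDegree_eval₂_le
        (![1,0,0,0,-2,0,0,0,0,Polynomial.X] : Fin 10 → Polynomial k)
        (by
          intro i hi
          fin_cases i
          · show (1 : Polynomial k).natDegree = 0; simp
          · show (0 : Polynomial k).natDegree = 0; simp
          · show (0 : Polynomial k).natDegree = 0; simp
          · show (0 : Polynomial k).natDegree = 0; simp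
          · show ((-2 : Polynomial k)).natDegree = 0; simp
          · show (0 : Polynomial k).natDegree = 0; simp
          · show (0 : Polynomial k).natDegree = 0; simp
          · show (0 : Polynomial k).natDegree = 0; simp
          · show (0 : Polynomial k).natDegree = 0; simp
          · exact absurd rfl hi)
        (by rw [vecten9]; exact le_of_eq Polynomial.natDegree_X)
        (Qpoly k)
    rw [key, Polynomial.natDegree_X_pow_sub_C] at hle
    omega
  · intro A B C D
    have hA : (A : Matrix (Fin 2) (Fin 2) k) 0 0 * (A : Matrix (Fin 2) (Fin 2) k) 1 1
        - (A : Matrix (Fin 2) (Fin 2) k) 0 1 * (A : Matrix (Fin 2) (Fin 2) k) 1 0 = 1 := by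
      rw [← Matrix.det_fin_two]; exact A.2
    have hB : (B : Matrix (Fin 2) (Fin 2) k) 0 0 * (B : Matrix (Fin 2) (Fin 2) k) 1 1
        - (B : Matrix (Fin 2) (Fin 2) k) 0 1 * (B : Matrix (Fin 2) (Fin 2) k) 1 0 = 1 := by
      rw [← Matrix.det_fin_two]; exact B.2
    have hC : (C : Matrix (Fin 2) (Fin 2) k) 0 0 * (C : Matrix (Fin 2) (Fin 2) k) 1 1
        - (C : Matrix (Fin 2) (Fin 2) k) 0 1 * (C : Matrix (Fin 2) (Fin 2) k) 1 0 = 1 := by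
      rw [← Matrix.det_fin_two]; exact C.2
    have hD : (D : Matrix (Fin 2) (Fin 2) k) 0 0 * (D : Matrix (Fin 2) (Fin 2) k) 1 1
        - (D : Matrix (Fin 2) (Fin 2) k) 0 1 * (D : Matrix (Fin 2) (Fin 2) k) 1 0 = 1 := by
      rw [← Matrix.det_fin_two]; exact D.2
    set a0 := (A : Matrix (Fin 2) (Fin 2) k) 0 0 with ha0
    set a1 := (A : Matrix (Fin 2) (Fin 2) k) 0 1 with ha1
    set a2 := (A : Matrix (Fin 2) (Fin 2) k) 1 0 with ha2
    set a3 := (A : Matrix (Fin 2) (Fin 2) k) 1 1 with ha3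
    set b0 := (B : Matrix (Fin 2) (Fin 2) k) 0 0 with hb0
    set b1 := (B : Matrix (Fin 2) (Fin 2) k) 0 1 with hb1
    set b2 := (B : Matrix (Fin 2) (Fin 2) k) 1 0 with hb2
    set b3 := (B : Matrix (Fin 2) (Fin 2) k) 1 1 with hb3
    set c0 := (C : Matrix (Fin 2) (Fin 2) k) 0 0 with hc0
    set c1 := (C : Matrix (Fin 2) (Fin 2) k) 0 1 with hc1
    set c2 := (C : Matrix (Fin 2) (Fin 2) k) 1 0 with hc2
    set c3 := (C : Matrix (Fin 2) (Fin 2) k) 1 1 with hc3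
    set d0 := (D : Matrix (Fin 2) (Fin 2) k) 0 0 with hd0
    set d1 := (D : Matrix (Fin 2) (Fin 2) k) 0 1 with hd1
    set d2 := (D : Matrix (Fin 2) (Fin 2) k) 1 0 with hd2
    set d3 := (D : Matrix (Fin 2) (Fin 2) k) 1 1 with hd3
    simp only [Qpoly, Qc0, Qc1, Qc2, Qc3, Qc4, Qc5, Qc6, Qc7, Qc8, map_add, map_mul, map_pow, MvPolynomial.eval_C, MvPolynomial.eval_X,
      vecten0, vecten1, vecten2, vecten3, vecten4, vecten5, vecten6, vecten7, vecten8, vecten9,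
      trSL, Matrix.SpecialLinearGroup.coe_mul, Matrix.trace_fin_two, Matrix.mul_apply,
      Fin.sum_univ_two]
    linear_combination ((-8 : k) + (4 : k) * d3 ^ 2 + (4 : k) * d0 ^ 2 + (4 : k) * c3 ^ 2 + (-4 : k) * c3 ^ 2 * d0 * d3 + (4 : k) * c2 * c3 * d1 * d3 + (-4 : k) * c2 * c3 * d0 * d1 + (2 : k) * c2 ^ 2 * d1 ^ 2 + (4 : k) * c1 * c3 * d2 * d3 + (-4 : k) * c1 * c3 * d0 * d2 + (4 : k) * c1 * c2 * d1 * d2 + (2 : k) * c1 ^ 2 * d2 ^ 2 + (-4 : k) * c0 * c3 * d3 ^ 2 + (8 : k) * c0 * c3 * d0 * d3 + (-4 : k) * c0 * c3 * d0 ^ 2 + (-4 : k) * c0 * c2 * d1 * d3 + (4 : k) * c0 * c2 * d0 * d1 + (-4 : k) * c0 * c1 * d2 * d3 + (4 : k) * c0 * c1 * d0 * d2 + (4 : k) * c0 ^ 2 + (-4 : k) * c0 ^ 2 * d0 * d3 + (4 : k) * b3 ^ 2 + (-4 : k) * b3 ^ 2 * d0 * d3 + (-1 : k) * b3 ^ 2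 * c2 ^ 2 * d1 ^ 2 + (-2 : k) * b3 ^ 2 * c1 * c2 * d1 * d2 + (-1 : k) * b3 ^ 2 * c1 ^ 2 * d2 ^ 2 + (-4 : k) * b3 ^ 2 * c0 * c3 + (4 : k) * b3 ^ 2 * c0 * c3 * d0 * d3 + (4 : k) * b2 * b3 * d1 * d3 + (-4 : k) * b2 * b3 * d0 * d1 + (2 : k) * b2 * b3 * c2 * c3 * d1 ^ 2 + (4 : k) * b2 * b3 * c1 * c3 + (2 : k) * b2 * b3 * c1 * c3 * d1 * d2 + (-4 : k) * b2 * b3 * c1 * c3 * d0 * d3 + (2 : k) * b2 * b3 * c1 * c2 * d1 * d3 + (-2 : k) * b2 * b3 * c1 * c2 * d0 * d1 + (2 : k) * b2 * b3 * c1 ^ 2 * d2 * d3 + (-2 : k) * b2 * b3 * c1 ^ 2 * d0 * d2 + (-4 : k) * b2 * b3 * c0 * c3 * d1 * d3 + (4 : k) * b2 * b3 * c0 * c3 * d0 * d1 + (-2 : k) * b2 * b3 * c0 * c2 * d1 ^ 2 + (-4 : k) * b2 * b3 * c0 * c1 + (-2 : k) * b2 * b3 * c0 * c1 * d1 * d2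 + (4 : k) * b2 * b3 * c0 * c1 * d0 * d3 + (2 : k) * b2 ^ 2 * d1 ^ 2 + (-1 : k) * b2 ^ 2 * c3 ^ 2 * d1 ^ 2 + (2 : k) * b2 ^ 2 * c1 * c3 * d1 * d3 + (-2 : k) * b2 ^ 2 * c1 * c3 * d0 * d1 + (2 : k) * b2 ^ 2 * c1 * c2 * d1 ^ 2 + (2 : k) * b2 ^ 2 * c1 ^ 2 + (-1 : k) * b2 ^ 2 * c1 ^ 2 * d3 ^ 2 + (2 : k) * b2 ^ 2 * c1 ^ 2 * d1 * d2 + (-1 : k) * b2 ^ 2 * c1 ^ 2 * d0 ^ 2 + (-2 : k) * b2 ^ 2 * c0 * c1 * d1 * d3 + (2 : k) * b2 ^ 2 * c0 * c1 * d0 * d1 + (-1 : k) * b2 ^ 2 * c0 ^ 2 * d1 ^ 2 + (4 : k) * b1 * b3 * d2 * d3 + (-4 : k) * b1 * b3 * d0 * d2 + (4 : k) * b1 * b3 * c2 * c3 + (2 : k) * b1 * b3 * c2 * c3 * d1 * d2 + (-4 : k) * b1 * b3 * c2 * c3 * d0 * d3 + (2 : k) * b1 * b3 * c2 ^ 2 *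 d1 * d3 + (-2 : k) * b1 * b3 * c2 ^ 2 * d0 * d1 + (2 : k) * b1 * b3 * c1 * c3 * d2 ^ 2 + (2 : k) * b1 * b3 * c1 * c2 * d2 * d3 + (-2 : k) * b1 * b3 * c1 * c2 * d0 * d2 + (-4 : k) * b1 * b3 * c0 * c3 * d2 * d3 + (4 : k) * b1 * b3 * c0 * c3 * d0 * d2 + (-4 : k) * b1 * b3 * c0 * c2 + (-2 : k) * b1 * b3 * c0 * c2 * d1 * d2 + (4 : k) * b1 * b3 * c0 * c2 * d0 * d3 + (-2 : k) * b1 * b3 * c0 * c1 * d2 ^ 2 + (4 : k) * b1 * b2 * d1 * d2 + (-2 : k) * b1 * b2 * c3 ^ 2 * d1 * d2 + (2 : k) * b1 * b2 * c2 * c3 * d1 * d3 + (-2 : k) * b1 * b2 * c2 * c3 * d0 * d1 + (2 : k) * b1 * b2 * c2 ^ 2 * d1 ^ 2 + (2 : k) * b1 * b2 * c1 * c3 * d2 * d3 + (-2 : k) * b1 * b2 * c1 * c3 * d0 * d2 + (4 : k) * b1 * b2 * c1 * c2 + (-2 : k) * b1 * b2 * c1 * c2 * d3 ^ 2 + (4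 : k) * b1 * b2 * c1 * c2 * d1 * d2 + (-2 : k) * b1 * b2 * c1 * c2 * d0 ^ 2 + (2 : k) * b1 * b2 * c1 ^ 2 * d2 ^ 2 + (-2 : k) * b1 * b2 * c0 * c2 * d1 * d3 + (2 : k) * b1 * b2 * c0 * c2 * d0 * d1 + (-2 : k) * b1 * b2 * c0 * c1 * d2 * d3 + (2 : k) * b1 * b2 * c0 * c1 * d0 * d2 + (-2 : k) * b1 * b2 * c0 ^ 2 * d1 * d2 + (2 : k) * b1 ^ 2 * d2 ^ 2 + (-1 : k) * b1 ^ 2 * c3 ^ 2 * d2 ^ 2 + (2 : k) * b1 ^ 2 * c2 * c3 * d2 * d3 + (-2 : k) * b1 ^ 2 * c2 * c3 * d0 * d2 + (2 : k) * b1 ^ 2 * c2 ^ 2 + (-1 : k) * b1 ^ 2 * c2 ^ 2 * d3 ^ 2 + (2 : k) * b1 ^ 2 * c2 ^ 2 * d1 * d2 + (-1 : k) * b1 ^ 2 * c2 ^ 2 * d0 ^ 2 + (2 : k) * b1 ^ 2 * c1 * c2 * d2 ^ 2 + (-2 : k) * b1 ^ 2 * c0 * c2 * d2 * d3 + (2 :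 k) * b1 ^ 2 * c0 * c2 * d0 * d2 + (-1 : k) * b1 ^ 2 * c0 ^ 2 * d2 ^ 2 + (-4 : k) * b0 * b3 * d3 ^ 2 + (8 : k) * b0 * b3 * d0 * d3 + (-4 : k) * b0 * b3 * d0 ^ 2 + (-4 : k) * b0 * b3 * c3 ^ 2 + (4 : k) * b0 * b3 * c3 ^ 2 * d0 * d3 + (-4 : k) * b0 * b3 * c2 * c3 * d1 * d3 + (4 : k) * b0 * b3 * c2 * c3 * d0 * d1 + (-4 : k) * b0 * b3 * c1 * c3 * d2 * d3 + (4 : k) * b0 * b3 * c1 * c3 * d0 * d2 + (8 : k) * b0 * b3 * c0 * c3 + (4 : k) * b0 * b3 * c0 * c3 * d3 ^ 2 + (-16 : k) * b0 * b3 * c0 * c3 * d0 * d3 + (4 : k) * b0 * b3 * c0 * c3 * d0 ^ 2 + (4 : k) * b0 * b3 * c0 * c2 * d1 * d3 + (-4 : k) * b0 * b3 * c0 * c2 * d0 * d1 + (4 : k) * b0 * b3 * c0 * c1 * d2 * d3 + (-4 : k) * b0 * b3 * c0 * c1 * d0 * d2 + (-4 : k) * b0 * b3 * c0 ^ 2 +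 (4 : k) * b0 * b3 * c0 ^ 2 * d0 * d3 + (-4 : k) * b0 * b2 * d1 * d3 + (4 : k) * b0 * b2 * d0 * d1 + (-2 : k) * b0 * b2 * c2 * c3 * d1 ^ 2 + (-4 : k) * b0 * b2 * c1 * c3 + (-2 : k) * b0 * b2 * c1 * c3 * d1 * d2 + (4 : k) * b0 * b2 * c1 * c3 * d0 * d3 + (-2 : k) * b0 * b2 * c1 * c2 * d1 * d3 + (2 : k) * b0 * b2 * c1 * c2 * d0 * d1 + (-2 : k) * b0 * b2 * c1 ^ 2 * d2 * d3 + (2 : k) * b0 * b2 * c1 ^ 2 * d0 * d2 + (4 : k) * b0 * b2 * c0 * c3 * d1 * d3 + (-4 : k) * b0 * b2 * c0 * c3 * d0 * d1 + (2 : k) * b0 * b2 * c0 * c2 * d1 ^ 2 + (4 : k) * b0 * b2 * c0 * c1 + (2 : k) * b0 * b2 * c0 * c1 * d1 * d2 + (-4 : k) * b0 * b2 * c0 * c1 * d0 * d3 + (-4 : k) * b0 * b1 * d2 * d3 + (4 : k) * b0 * b1 * d0 * d2 + (-4 : k) * b0 * b1 * c2 * c3 + (-2 : k) * b0 * b1 *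 c2 * c3 * d1 * d2 + (4 : k) * b0 * b1 * c2 * c3 * d0 * d3 + (-2 : k) * b0 * b1 * c2 ^ 2 * d1 * d3 + (2 : k) * b0 * b1 * c2 ^ 2 * d0 * d1 + (-2 : k) * b0 * b1 * c1 * c3 * d2 ^ 2 + (-2 : k) * b0 * b1 * c1 * c2 * d2 * d3 + (2 : k) * b0 * b1 * c1 * c2 * d0 * d2 + (4 : k) * b0 * b1 * c0 * c3 * d2 * d3 + (-4 : k) * b0 * b1 * c0 * c3 * d0 * d2 + (4 : k) * b0 * b1 * c0 * c2 + (2 : k) * b0 * b1 * c0 * c2 * d1 * d2 + (-4 : k) * b0 * b1 * c0 * c2 * d0 * d3 + (2 : k) * b0 * b1 * c0 * c1 * d2 ^ 2 + (4 : k) * b0 ^ 2 + (-4 : k) * b0 ^ 2 * d0 * d3 + (-1 : k) * b0 ^ 2 * c2 ^ 2 * d1 ^ 2 + (-2 : k) * b0 ^ 2 * c1 * c2 * d1 * d2 + (-1 : k) * b0 ^ 2 * c1 ^ 2 * d2 ^ 2 + (-4 : k) * b0 ^ 2 * c0 * c3 + (4 : k) * b0 ^ 2 * c0 * c3 * d0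 * d3) * hA +
      ((-8 : k) + (8 : k) * d0 * d3 + (2 : k) * c2 ^ 2 * d1 ^ 2 + (4 : k) * c1 * c2 * d1 * d2 + (2 : k) * c1 ^ 2 * d2 ^ 2 + (8 : k) * c0 * c3 + (-8 : k) * c0 * c3 * d0 * d3 + (4 : k) * a3 ^ 2 + (-4 : k) * a3 ^ 2 * d0 * d3 + (-1 : k) * a3 ^ 2 * c2 ^ 2 * d1 ^ 2 + (-2 : k) * a3 ^ 2 * c1 * c2 * d1 * d2 + (-1 : k) * a3 ^ 2 * c1 ^ 2 * d2 ^ 2 + (-4 : k) * a3 ^ 2 * c0 * c3 + (4 : k) * a3 ^ 2 * c0 * c3 * d0 * d3 + (4 : k) * a2 * a3 * d1 * d3 + (-4 : k) * a2 * a3 * d0 * d1 + (2 : k) * a2 * a3 * c2 * c3 * d1 ^ 2 + (4 : k) * a2 * a3 * c1 * c3 + (2 : k) * a2 * a3 * c1 * c3 * d1 * d2 + (-4 : k) * a2 * a3 * c1 * c3 * d0 * d3 + (2 : k) * a2 * a3 * c1 * c2 * d1 * d3 + (-2 : k) * a2 * a3 * c1 * c2 * d0 * d1 + (2 : k) * a2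 * a3 * c1 ^ 2 * d2 * d3 + (-2 : k) * a2 * a3 * c1 ^ 2 * d0 * d2 + (-4 : k) * a2 * a3 * c0 * c3 * d1 * d3 + (4 : k) * a2 * a3 * c0 * c3 * d0 * d1 + (-2 : k) * a2 * a3 * c0 * c2 * d1 ^ 2 + (-4 : k) * a2 * a3 * c0 * c1 + (-2 : k) * a2 * a3 * c0 * c1 * d1 * d2 + (4 : k) * a2 * a3 * c0 * c1 * d0 * d3 + (2 : k) * a2 ^ 2 * d1 ^ 2 + (-1 : k) * a2 ^ 2 * c3 ^ 2 * d1 ^ 2 + (2 : k) * a2 ^ 2 * c1 * c3 * d1 * d3 + (-2 : k) * a2 ^ 2 * c1 * c3 * d0 * d1 + (2 : k) * a2 ^ 2 * c1 * c2 * d1 ^ 2 + (2 : k) * a2 ^ 2 * c1 ^ 2 + (-1 : k) * a2 ^ 2 * c1 ^ 2 * d3 ^ 2 + (2 : k) * a2 ^ 2 * c1 ^ 2 * d1 * d2 + (-1 : k) * a2 ^ 2 * c1 ^ 2 * d0 ^ 2 + (-2 : k) * a2 ^ 2 * c0 * c1 * d1 * d3 + (2 : k) * a2 ^ 2 * c0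 * c1 * d0 * d1 + (-1 : k) * a2 ^ 2 * c0 ^ 2 * d1 ^ 2 + (4 : k) * a1 * a3 * d2 * d3 + (-4 : k) * a1 * a3 * d0 * d2 + (4 : k) * a1 * a3 * c2 * c3 + (2 : k) * a1 * a3 * c2 * c3 * d1 * d2 + (-4 : k) * a1 * a3 * c2 * c3 * d0 * d3 + (2 : k) * a1 * a3 * c2 ^ 2 * d1 * d3 + (-2 : k) * a1 * a3 * c2 ^ 2 * d0 * d1 + (2 : k) * a1 * a3 * c1 * c3 * d2 ^ 2 + (2 : k) * a1 * a3 * c1 * c2 * d2 * d3 + (-2 : k) * a1 * a3 * c1 * c2 * d0 * d2 + (-4 : k) * a1 * a3 * c0 * c3 * d2 * d3 + (4 : k) * a1 * a3 * c0 * c3 * d0 * d2 + (-4 : k) * a1 * a3 * c0 * c2 + (-2 : k) * a1 * a3 * c0 * c2 * d1 * d2 + (4 : k) * a1 * a3 * c0 * c2 * d0 * d3 + (-2 : k) * a1 * a3 * c0 * c1 * d2 ^ 2 + (-4 : k) * a1 * a2 * d3 ^ 2 + (4 : k) * a1 * a2 * d1 * d2 + (8 : k) * a1 * a2 * d0 *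 d3 + (-4 : k) * a1 * a2 * d0 ^ 2 + (-4 : k) * a1 * a2 * c3 ^ 2 + (-2 : k) * a1 * a2 * c3 ^ 2 * d1 * d2 + (4 : k) * a1 * a2 * c3 ^ 2 * d0 * d3 + (-2 : k) * a1 * a2 * c2 * c3 * d1 * d3 + (2 : k) * a1 * a2 * c2 * c3 * d0 * d1 + (2 : k) * a1 * a2 * c2 ^ 2 * d1 ^ 2 + (-2 : k) * a1 * a2 * c1 * c3 * d2 * d3 + (2 : k) * a1 * a2 * c1 * c3 * d0 * d2 + (4 : k) * a1 * a2 * c1 * c2 + (-2 : k) * a1 * a2 * c1 * c2 * d3 ^ 2 + (4 : k) * a1 * a2 * c1 * c2 * d1 * d2 + (-2 : k) * a1 * a2 * c1 * c2 * d0 ^ 2 + (2 : k) * a1 * a2 * c1 ^ 2 * d2 ^ 2 + (8 : k) * a1 * a2 * c0 * c3 + (4 : k) * a1 * a2 * c0 * c3 * d3 ^ 2 + (-16 : k) * a1 * a2 * c0 * c3 * d0 * d3 + (4 : k) * a1 * a2 * c0 * c3 * d0 ^ 2 + (2 : k) * a1 * a2 * c0 * c2 * d1 * d3 + (-2 : k)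 * a1 * a2 * c0 * c2 * d0 * d1 + (2 : k) * a1 * a2 * c0 * c1 * d2 * d3 + (-2 : k) * a1 * a2 * c0 * c1 * d0 * d2 + (-4 : k) * a1 * a2 * c0 ^ 2 + (-2 : k) * a1 * a2 * c0 ^ 2 * d1 * d2 + (4 : k) * a1 * a2 * c0 ^ 2 * d0 * d3 + (2 : k) * a1 ^ 2 * d2 ^ 2 + (-1 : k) * a1 ^ 2 * c3 ^ 2 * d2 ^ 2 + (2 : k) * a1 ^ 2 * c2 * c3 * d2 * d3 + (-2 : k) * a1 ^ 2 * c2 * c3 * d0 * d2 + (2 : k) * a1 ^ 2 * c2 ^ 2 + (-1 : k) * a1 ^ 2 * c2 ^ 2 * d3 ^ 2 + (2 : k) * a1 ^ 2 * c2 ^ 2 * d1 * d2 + (-1 : k) * a1 ^ 2 * c2 ^ 2 * d0 ^ 2 + (2 : k) * a1 ^ 2 * c1 * c2 * d2 ^ 2 + (-2 : k) * a1 ^ 2 * c0 * c2 * d2 * d3 + (2 : k) * a1 ^ 2 * c0 * c2 * d0 * d2 + (-1 : k) * a1 ^ 2 * c0 ^ 2 * d2 ^ 2 + (-4 : k) *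 a0 * a2 * d1 * d3 + (4 : k) * a0 * a2 * d0 * d1 + (-2 : k) * a0 * a2 * c2 * c3 * d1 ^ 2 + (-4 : k) * a0 * a2 * c1 * c3 + (-2 : k) * a0 * a2 * c1 * c3 * d1 * d2 + (4 : k) * a0 * a2 * c1 * c3 * d0 * d3 + (-2 : k) * a0 * a2 * c1 * c2 * d1 * d3 + (2 : k) * a0 * a2 * c1 * c2 * d0 * d1 + (-2 : k) * a0 * a2 * c1 ^ 2 * d2 * d3 + (2 : k) * a0 * a2 * c1 ^ 2 * d0 * d2 + (4 : k) * a0 * a2 * c0 * c3 * d1 * d3 + (-4 : k) * a0 * a2 * c0 * c3 * d0 * d1 + (2 : k) * a0 * a2 * c0 * c2 * d1 ^ 2 + (4 : k) * a0 * a2 * c0 * c1 + (2 : k) * a0 * a2 * c0 * c1 * d1 * d2 + (-4 : k) * a0 * a2 * c0 * c1 * d0 * d3 + (-4 : k) * a0 * a1 * d2 * d3 + (4 : k) * a0 * a1 * d0 * d2 + (-4 : k) * a0 * a1 * c2 * c3 + (-2 : k) * a0 * a1 * c2 * c3 * d1 * d2 + (4 : k) * a0 * a1 * c2 * c3 * d0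 * d3 + (-2 : k) * a0 * a1 * c2 ^ 2 * d1 * d3 + (2 : k) * a0 * a1 * c2 ^ 2 * d0 * d1 + (-2 : k) * a0 * a1 * c1 * c3 * d2 ^ 2 + (-2 : k) * a0 * a1 * c1 * c2 * d2 * d3 + (2 : k) * a0 * a1 * c1 * c2 * d0 * d2 + (4 : k) * a0 * a1 * c0 * c3 * d2 * d3 + (-4 : k) * a0 * a1 * c0 * c3 * d0 * d2 + (4 : k) * a0 * a1 * c0 * c2 + (2 : k) * a0 * a1 * c0 * c2 * d1 * d2 + (-4 : k) * a0 * a1 * c0 * c2 * d0 * d3 + (2 : k) * a0 * a1 * c0 * c1 * d2 ^ 2 + (4 : k) * a0 ^ 2 + (-4 : k) * a0 ^ 2 * d0 * d3 + (-1 : k) * a0 ^ 2 * c2 ^ 2 * d1 ^ 2 + (-2 : k) * a0 ^ 2 * c1 * c2 * d1 * d2 + (-1 : k) * a0 ^ 2 * c1 ^ 2 * d2 ^ 2 + (-4 : k) * a0 ^ 2 * c0 * c3 + (4 : k) * a0 ^ 2 * c0 * c3 * d0 * d3) * hB +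
      ((2 : k) * b2 ^ 2 * d1 ^ 2 + (8 : k) * b1 * b2 + (4 : k) * b1 * b2 * d1 * d2 + (-8 : k) * b1 * b2 * d0 * d3 + (2 : k) * b1 ^ 2 * d2 ^ 2 + (-1 : k) * a3 ^ 2 * b2 ^ 2 * d1 ^ 2 + (-4 : k) * a3 ^ 2 * b1 * b2 + (-2 : k) * a3 ^ 2 * b1 * b2 * d1 * d2 + (4 : k) * a3 ^ 2 * b1 * b2 * d0 * d3 + (-1 : k) * a3 ^ 2 * b1 ^ 2 * d2 ^ 2 + (2 : k) * a2 * a3 * b2 * b3 * d1 ^ 2 + (4 : k) * a2 * a3 * b1 * b3 + (2 : k) * a2 * a3 * b1 * b3 * d1 * d2 + (-4 : k) * a2 * a3 * b1 * b3 * d0 * d3 + (-2 : k) * a2 * a3 * b1 * b2 * d1 * d3 + (2 : k) * a2 * a3 * b1 * b2 * d0 * d1 + (2 : k) * a2 * a3 * b1 ^ 2 * d2 * d3 + (-2 : k) * a2 * a3 * b1 ^ 2 * d0 * d2 + (-2 : k) * a2 * a3 * b0 * b2 * d1 ^ 2 + (-4 : k) * a2 * a3 * b0 * b1 + (-2 :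 k) * a2 * a3 * b0 * b1 * d1 * d2 + (4 : k) * a2 * a3 * b0 * b1 * d0 * d3 + (2 : k) * a2 ^ 2 * d1 ^ 2 + (-1 : k) * a2 ^ 2 * b3 ^ 2 * d1 ^ 2 + (2 : k) * a2 ^ 2 * b1 * b3 * d1 * d3 + (-2 : k) * a2 ^ 2 * b1 * b3 * d0 * d1 + (2 : k) * a2 ^ 2 * b1 * b2 * d1 ^ 2 + (2 : k) * a2 ^ 2 * b1 ^ 2 + (-1 : k) * a2 ^ 2 * b1 ^ 2 * d3 ^ 2 + (2 : k) * a2 ^ 2 * b1 ^ 2 * d1 * d2 + (-1 : k) * a2 ^ 2 * b1 ^ 2 * d0 ^ 2 + (-2 : k) * a2 ^ 2 * b0 * b1 * d1 * d3 + (2 : k) * a2 ^ 2 * b0 * b1 * d0 * d1 + (-1 : k) * a2 ^ 2 * b0 ^ 2 * d1 ^ 2 + (4 : k) * a1 * a3 * b2 * b3 + (2 : k) * a1 * a3 * b2 * b3 * d1 * d2 + (-4 : k) * a1 * a3 * b2 * b3 * d0 * d3 + (2 : k) * a1 * a3 * b2 ^ 2 * d1 * d3 + (-2 : k) * a1 *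 a3 * b2 ^ 2 * d0 * d1 + (2 : k) * a1 * a3 * b1 * b3 * d2 ^ 2 + (-2 : k) * a1 * a3 * b1 * b2 * d2 * d3 + (2 : k) * a1 * a3 * b1 * b2 * d0 * d2 + (-4 : k) * a1 * a3 * b0 * b2 + (-2 : k) * a1 * a3 * b0 * b2 * d1 * d2 + (4 : k) * a1 * a3 * b0 * b2 * d0 * d3 + (-2 : k) * a1 * a3 * b0 * b1 * d2 ^ 2 + (8 : k) * a1 * a2 + (4 : k) * a1 * a2 * d1 * d2 + (-8 : k) * a1 * a2 * d0 * d3 + (-4 : k) * a1 * a2 * b3 ^ 2 + (-2 : k) * a1 * a2 * b3 ^ 2 * d1 * d2 + (4 : k) * a1 * a2 * b3 ^ 2 * d0 * d3 + (-2 : k) * a1 * a2 * b2 * b3 * d1 * d3 + (2 : k) * a1 * a2 * b2 * b3 * d0 * d1 + (2 : k) * a1 * a2 * b2 ^ 2 * d1 ^ 2 + (-2 : k) * a1 * a2 * b1 * b3 * d2 * d3 + (2 : k) * a1 * a2 * b1 * b3 * d0 * d2 + (12 : k) * a1 * a2 * b1 * b2 + (2 : k) * a1 * a2 * b1 * b2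 * d3 ^ 2 + (4 : k) * a1 * a2 * b1 * b2 * d1 * d2 + (-16 : k) * a1 * a2 * b1 * b2 * d0 * d3 + (2 : k) * a1 * a2 * b1 * b2 * d0 ^ 2 + (2 : k) * a1 * a2 * b1 ^ 2 * d2 ^ 2 + (2 : k) * a1 * a2 * b0 * b2 * d1 * d3 + (-2 : k) * a1 * a2 * b0 * b2 * d0 * d1 + (2 : k) * a1 * a2 * b0 * b1 * d2 * d3 + (-2 : k) * a1 * a2 * b0 * b1 * d0 * d2 + (-4 : k) * a1 * a2 * b0 ^ 2 + (-2 : k) * a1 * a2 * b0 ^ 2 * d1 * d2 + (4 : k) * a1 * a2 * b0 ^ 2 * d0 * d3 + (2 : k) * a1 ^ 2 * d2 ^ 2 + (-1 : k) * a1 ^ 2 * b3 ^ 2 * d2 ^ 2 + (2 : k) * a1 ^ 2 * b2 * b3 * d2 * d3 + (-2 : k) * a1 ^ 2 * b2 * b3 * d0 * d2 + (2 : k) * a1 ^ 2 * b2 ^ 2 + (-1 : k) * a1 ^ 2 * b2 ^ 2 * d3 ^ 2 + (2 : k) * a1 ^ 2 * b2 ^ 2 * d1 * d2 + (-1 : k)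 * a1 ^ 2 * b2 ^ 2 * d0 ^ 2 + (2 : k) * a1 ^ 2 * b1 * b2 * d2 ^ 2 + (-2 : k) * a1 ^ 2 * b0 * b2 * d2 * d3 + (2 : k) * a1 ^ 2 * b0 * b2 * d0 * d2 + (-1 : k) * a1 ^ 2 * b0 ^ 2 * d2 ^ 2 + (-2 : k) * a0 * a2 * b2 * b3 * d1 ^ 2 + (-4 : k) * a0 * a2 * b1 * b3 + (-2 : k) * a0 * a2 * b1 * b3 * d1 * d2 + (4 : k) * a0 * a2 * b1 * b3 * d0 * d3 + (2 : k) * a0 * a2 * b1 * b2 * d1 * d3 + (-2 : k) * a0 * a2 * b1 * b2 * d0 * d1 + (-2 : k) * a0 * a2 * b1 ^ 2 * d2 * d3 + (2 : k) * a0 * a2 * b1 ^ 2 * d0 * d2 + (2 : k) * a0 * a2 * b0 * b2 * d1 ^ 2 + (4 : k) * a0 * a2 * b0 * b1 + (2 : k) * a0 * a2 * b0 * b1 * d1 * d2 + (-4 : k) * a0 * a2 * b0 * b1 * d0 * d3 + (-4 : k) * a0 * a1 * b2 * b3 + (-2 : k) * a0 * a1 * b2 * b3 * d1 * d2 + (4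 : k) * a0 * a1 * b2 * b3 * d0 * d3 + (-2 : k) * a0 * a1 * b2 ^ 2 * d1 * d3 + (2 : k) * a0 * a1 * b2 ^ 2 * d0 * d1 + (-2 : k) * a0 * a1 * b1 * b3 * d2 ^ 2 + (2 : k) * a0 * a1 * b1 * b2 * d2 * d3 + (-2 : k) * a0 * a1 * b1 * b2 * d0 * d2 + (4 : k) * a0 * a1 * b0 * b2 + (2 : k) * a0 * a1 * b0 * b2 * d1 * d2 + (-4 : k) * a0 * a1 * b0 * b2 * d0 * d3 + (2 : k) * a0 * a1 * b0 * b1 * d2 ^ 2 + (-1 : k) * a0 ^ 2 * b2 ^ 2 * d1 ^ 2 + (-4 : k) * a0 ^ 2 * b1 * b2 + (-2 : k) * a0 ^ 2 * b1 * b2 * d1 * d2 + (4 : k) * a0 ^ 2 * b1 * b2 * d0 * d3 + (-1 : k) * a0 ^ 2 * b1 ^ 2 * d2 ^ 2) * hC +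
      ((2 : k) * b2 ^ 2 * c1 ^ 2 + (-4 : k) * b1 * b2 * c1 * c2 + (2 : k) * b1 ^ 2 * c2 ^ 2 + (-1 : k) * a3 ^ 2 * b2 ^ 2 * c1 ^ 2 + (2 : k) * a3 ^ 2 * b1 * b2 * c1 * c2 + (-1 : k) * a3 ^ 2 * b1 ^ 2 * c2 ^ 2 + (2 : k) * a2 * a3 * b2 * b3 * c1 ^ 2 + (-2 : k) * a2 * a3 * b1 * b3 * c1 * c2 + (-2 : k) * a2 * a3 * b1 * b2 * c1 * c3 + (2 : k) * a2 * a3 * b1 * b2 * c0 * c1 + (2 : k) * a2 * a3 * b1 ^ 2 * c2 * c3 + (-2 : k) * a2 * a3 * b1 ^ 2 * c0 * c2 + (-2 : k) * a2 * a3 * b0 * b2 * c1 ^ 2 + (2 : k) * a2 * a3 * b0 * b1 * c1 * c2 + (2 : k) * a2 ^ 2 * c1 ^ 2 + (-1 : k) * a2 ^ 2 * b3 ^ 2 * c1 ^ 2 + (2 : k) * a2 ^ 2 * b1 * b3 * c1 * c3 + (-2 : k) * a2 ^ 2 * b1 * b3 * c0 * c1 + (2 : k) * a2 ^ 2 * b1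 * b2 * c1 ^ 2 + (2 : k) * a2 ^ 2 * b1 ^ 2 + (-1 : k) * a2 ^ 2 * b1 ^ 2 * c3 ^ 2 + (2 : k) * a2 ^ 2 * b1 ^ 2 * c1 * c2 + (-1 : k) * a2 ^ 2 * b1 ^ 2 * c0 ^ 2 + (-2 : k) * a2 ^ 2 * b0 * b1 * c1 * c3 + (2 : k) * a2 ^ 2 * b0 * b1 * c0 * c1 + (-1 : k) * a2 ^ 2 * b0 ^ 2 * c1 ^ 2 + (-2 : k) * a1 * a3 * b2 * b3 * c1 * c2 + (2 : k) * a1 * a3 * b2 ^ 2 * c1 * c3 + (-2 : k) * a1 * a3 * b2 ^ 2 * c0 * c1 + (2 : k) * a1 * a3 * b1 * b3 * c2 ^ 2 + (-2 : k) * a1 * a3 * b1 * b2 * c2 * c3 + (2 : k) * a1 * a3 * b1 * b2 * c0 * c2 + (2 : k) * a1 * a3 * b0 * b2 * c1 * c2 + (-2 : k) * a1 * a3 * b0 * b1 * c2 ^ 2 + (-4 : k) * a1 * a2 * c1 * c2 + (2 : k) * a1 * a2 * b3 ^ 2 * c1 * c2 + (-2 : k) * a1 * a2 * b2 * b3 *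 c1 * c3 + (2 : k) * a1 * a2 * b2 * b3 * c0 * c1 + (2 : k) * a1 * a2 * b2 ^ 2 * c1 ^ 2 + (-2 : k) * a1 * a2 * b1 * b3 * c2 * c3 + (2 : k) * a1 * a2 * b1 * b3 * c0 * c2 + (-4 : k) * a1 * a2 * b1 * b2 + (2 : k) * a1 * a2 * b1 * b2 * c3 ^ 2 + (-12 : k) * a1 * a2 * b1 * b2 * c1 * c2 + (2 : k) * a1 * a2 * b1 * b2 * c0 ^ 2 + (2 : k) * a1 * a2 * b1 ^ 2 * c2 ^ 2 + (2 : k) * a1 * a2 * b0 * b2 * c1 * c3 + (-2 : k) * a1 * a2 * b0 * b2 * c0 * c1 + (2 : k) * a1 * a2 * b0 * b1 * c2 * c3 + (-2 : k) * a1 * a2 * b0 * b1 * c0 * c2 + (2 : k) * a1 * a2 * b0 ^ 2 * c1 * c2 + (2 : k) * a1 ^ 2 * c2 ^ 2 + (-1 : k) * a1 ^ 2 * b3 ^ 2 * c2 ^ 2 + (2 : k) * a1 ^ 2 * b2 * b3 * c2 * c3 + (-2 : k) * a1 ^ 2 * b2 * b3 * c0 * c2 + (2 : k) * a1 ^ 2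 * b2 ^ 2 + (-1 : k) * a1 ^ 2 * b2 ^ 2 * c3 ^ 2 + (2 : k) * a1 ^ 2 * b2 ^ 2 * c1 * c2 + (-1 : k) * a1 ^ 2 * b2 ^ 2 * c0 ^ 2 + (2 : k) * a1 ^ 2 * b1 * b2 * c2 ^ 2 + (-2 : k) * a1 ^ 2 * b0 * b2 * c2 * c3 + (2 : k) * a1 ^ 2 * b0 * b2 * c0 * c2 + (-1 : k) * a1 ^ 2 * b0 ^ 2 * c2 ^ 2 + (-2 : k) * a0 * a2 * b2 * b3 * c1 ^ 2 + (2 : k) * a0 * a2 * b1 * b3 * c1 * c2 + (2 : k) * a0 * a2 * b1 * b2 * c1 * c3 + (-2 : k) * a0 * a2 * b1 * b2 * c0 * c1 + (-2 : k) * a0 * a2 * b1 ^ 2 * c2 * c3 + (2 : k) * a0 * a2 * b1 ^ 2 * c0 * c2 + (2 : k) * a0 * a2 * b0 * b2 * c1 ^ 2 + (-2 : k) * a0 * a2 * b0 * b1 * c1 * c2 + (2 : k) * a0 * a1 * b2 * b3 * c1 * c2 + (-2 : k) * a0 * a1 * b2 ^ 2 * c1 * c3 + (2 : k) * a0 * a1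 * b2 ^ 2 * c0 * c1 + (-2 : k) * a0 * a1 * b1 * b3 * c2 ^ 2 + (2 : k) * a0 * a1 * b1 * b2 * c2 * c3 + (-2 : k) * a0 * a1 * b1 * b2 * c0 * c2 + (-2 : k) * a0 * a1 * b0 * b2 * c1 * c2 + (2 : k) * a0 * a1 * b0 * b1 * c2 ^ 2 + (-1 : k) * a0 ^ 2 * b2 ^ 2 * c1 ^ 2 + (2 : k) * a0 ^ 2 * b1 * b2 * c1 * c2 + (-1 : k) * a0 ^ 2 * b1 ^ 2 * c2 ^ 2) * hD
end

section
/- Let k be a field and let A, B ∈ SL_2(k). Then t_{[A,B]} = t_A² + t_B² + t_{AB}² − t_A·t_B·t_{AB} − 2, where [A,B] = A·B·A⁻¹·B⁻¹ is the commutator. -/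
/-- For `A, B ∈ SL₂(k)`,
`t_{[A,B]} = t_A² + t_B² + t_{AB}² − t_A t_B t_{AB} − 2`. -/
theorem trace_commutator {k : Type*} [Field k] (A B : Matrix.SpecialLinearGroup (Fin 2) k) :
    trSL (A * B * A⁻¹ * B⁻¹) =
      trSL A ^ 2 + trSL B ^ 2 + trSL (A * B) ^ 2
        - trSL A * trSL B * trSL (A * B) - 2 := by
  have hA : Matrix.det (A : Matrix (Fin 2) (Fin 2) k) = 1 := A.2
  have hB : Matrix.det (B : Matrix (Fin 2) (Fin 2) k) = 1 := B.2
  rw [Matrix.det_fin_two] at hA hB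
  simp only [trSL, Matrix.SpecialLinearGroup.coe_mul, Matrix.SpecialLinearGroup.coe_inv,
    Matrix.adjugate_fin_two, Matrix.trace_fin_two, Matrix.mul_apply, Fin.sum_univ_two,
    Matrix.of_apply, Matrix.cons_val', Matrix.cons_val_zero, Matrix.cons_val_one,
    Matrix.head_cons, Matrix.head_fin_const, Matrix.empty_val', Matrix.cons_val_fin_one]
  linear_combination (2*(B:Matrix (Fin 2) (Fin 2) k) 0 0*(B:Matrix (Fin 2) (Fin 2) k) 1 1 + (B:Matrix (Fin 2) (Fin 2) k) 0 0^2 + (B:Matrix (Fin 2) (Fin 2) k) 1 1^2 - 2) * hA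
    + ((A:Matrix (Fin 2) (Fin 2) k) 0 0^2 + (A:Matrix (Fin 2) (Fin 2) k) 1 1^2 + 2*(A:Matrix (Fin 2) (Fin 2) k) 0 1*(A:Matrix (Fin 2) (Fin 2) k) 1 0) * hB
end

section
/- Let k be a field and let A, B ∈ SL_2(k). Then the commutator satisfies the matrix identity [A,B] = −t_{AB}·t_B·A + t_{AB}·(AB) + t_B²·I − t_B·B + t_A·A − I, where I is the 2×2 identity matrix. -/
/-
For `M ∈ SL₂` the Cayley–Hamilton theorem reads `M² = t_M M - I`, equivalently
`M⁻¹ = t_M I - M`. Substituting the second form for `A⁻¹` and `B⁻¹` expresses `[A,B]` through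
`AB`, `AB²`, `ABA` and `(AB)²`; the first form applied to `B` and to `AB` reduces each of these
to a linear combination of `I`, `A`, `B` and `AB`, and `ABA = (AB)² B⁻¹ = t_{AB} A - B⁻¹`.
-/

open scoped MatrixGroups

namespace Matrix

variable {R : Type*} [CommRing R]

theorem adjugate_fin_two_eq_trace_smul_one_sub (M : Matrix (Fin 2) (Fin 2) R) :
    adjugate M = trace M • 1 - M := by
  ext i j
  fin_cases i <;> fin_cases j <;> simp [adjugate_fin_two, trace_fin_two]

theorem mul_self_fin_two (M : Matrix (Fin 2) (Fin 2) R) :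
    M * M = trace M • M - det M • 1 := by
  rw [← mul_adjugate M, adjugate_fin_two_eq_trace_smul_one_sub, mul_sub, Matrix.mul_smul,
    mul_one, sub_sub_cancel]

namespace SpecialLinearGroup

theorem coe_inv_fin_two (A : SL(2, R)) : ((A⁻¹ : SL(2, R)) : Matrix (Fin 2) (Fin 2) R) =
    trace (A : Matrix (Fin 2) (Fin 2) R) • 1 - A := by
  rw [coe_inv, adjugate_fin_two_eq_trace_smul_one_sub]

theorem coe_mul_self_fin_two (A : SL(2, R)) :
    (A : Matrix (Fin 2) (Fin 2) R) * A = trace (A : Matrix (Fin 2) (Fin 2) R) • A - 1 := by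
  rw [mul_self_fin_two, det_coe, one_smul]

theorem coe_mul_mul_fin_two (A B : SL(2, R)) :
    ((A * B * A : SL(2, R)) : Matrix (Fin 2) (Fin 2) R) =
      trace ((A * B : SL(2, R)) : Matrix (Fin 2) (Fin 2) R) • A - (B⁻¹ : SL(2, R)) := by
  have hABA : A * B * A = A * B * (A * B) * B⁻¹ := by group
  rw [hABA, coe_mul (A * B * (A * B)), coe_mul (A * B), coe_mul_self_fin_two, sub_mul,
    smul_mul_assoc, one_mul, ← coe_mul, mul_inv_cancel_right]

end SpecialLinearGroup

end Matrix

open Matrix Matrix.SpecialLinearGroup in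
/-- The matrix identity
`[A,B] = −t_{AB} t_B A + t_{AB} (AB) + t_B² I − t_B B + t_A A − I` for `A, B ∈ SL₂(k)`. -/
theorem commutator_matrix_identity {k : Type*} [Field k]
    (A B : Matrix.SpecialLinearGroup (Fin 2) k) :
    ((A * B * A⁻¹ * B⁻¹ : Matrix.SpecialLinearGroup (Fin 2) k) : Matrix (Fin 2) (Fin 2) k) =
      -(trSL (A * B) * trSL B) • (A : Matrix (Fin 2) (Fin 2) k)
        + trSL (A * B) • ((A * B : Matrix.SpecialLinearGroup (Fin 2) k) :
            Matrix (Fin 2) (Fin 2) k)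
        + trSL B ^ 2 • (1 : Matrix (Fin 2) (Fin 2) k)
        - trSL B • (B : Matrix (Fin 2) (Fin 2) k)
        + trSL A • (A : Matrix (Fin 2) (Fin 2) k)
        - (1 : Matrix (Fin 2) (Fin 2) k) := by
  have hABA := coe_mul_mul_fin_two A B
  have hABAB := coe_mul_self_fin_two (A * B)
  have hBB := coe_mul_self_fin_two B
  simp only [trSL, coe_mul, coe_inv_fin_two] at hABA hABAB ⊢
  set M := (A : Matrix (Fin 2) (Fin 2) k)
  set N := (B : Matrix (Fin 2) (Fin 2) k)
  calc M * N * (trace M • 1 - M) * (trace N • 1 - N)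
      = (trace M * trace N) • (M * N) - trace M • (M * (N * N)) - trace N • (M * N * M)
          + M * N * (M * N) := by
        simp only [mul_sub, sub_mul, Matrix.mul_smul, Matrix.smul_mul, mul_one, smul_smul,
          mul_assoc]
        module
    _ = _ := by
        rw [hABA, hABAB, hBB]
        simp only [mul_sub, Matrix.mul_smul, mul_one]
        module
end

section
/- Let k be a field and let A, B, C ∈ SL_2(k). Then t_{[A,B]C} = −t_{AB}·t_B·t_{AC} + t_{AB}·t_{ABC} + t_B²·t_C − t_B·t_{BC} + t_A·t_{AC} − t_C, where [A,B] = A·B·A⁻¹·B⁻¹ and t_{[A,B]C} is the trace of [A,B]·C. -/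
/-- For `A, B, C ∈ SL₂(k)`,
`t_{[A,B]C} = −t_{AB} t_B t_{AC} + t_{AB} t_{ABC} + t_B² t_C − t_B t_{BC} + t_A t_{AC} − t_C`. -/
theorem trace_commutator_C {k : Type*} [Field k]
    (A B C : Matrix.SpecialLinearGroup (Fin 2) k) :
    trSL (A * B * A⁻¹ * B⁻¹ * C) =
      -(trSL (A * B) * trSL B * trSL (A * C)) + trSL (A * B) * trSL (A * B * C)
        + trSL B ^ 2 * trSL C - trSL B * trSL (B * C) + trSL A * trSL (A * C)
        - trSL C := by
  have hA := A.2
  have hB := B.2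
  have hC := C.2
  simp only [Matrix.det_fin_two] at hA hB hC
  simp only [trSL, Matrix.SpecialLinearGroup.coe_mul, Matrix.SpecialLinearGroup.coe_inv,
    Matrix.adjugate_fin_two, Matrix.trace_fin_two, Matrix.mul_apply, Fin.sum_univ_two,
    Matrix.of_apply, Matrix.cons_val', Matrix.cons_val_zero, Matrix.cons_val_one,
    Matrix.head_cons, Matrix.head_fin_const, Matrix.empty_val', Matrix.cons_val_fin_one]
  linear_combination
    (-(C 1 1 : k) - C 0 0 + B 1 1 ^ 2 * C 0 0 - B 1 0 * B 1 1 * C 0 1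
      - B 0 1 * B 1 1 * C 1 0 + B 0 0 * B 1 1 * C 1 1 + B 0 0 * B 1 1 * C 0 0
      - B 0 0 * B 1 0 * C 0 1 - B 0 0 * B 0 1 * C 1 0 + B 0 0 ^ 2 * C 1 1) * hA +
    ((A 1 1 : k) ^ 2 * C 1 1 + A 1 0 * A 1 1 * C 0 1 + A 0 1 * A 1 1 * C 1 0
      + A 0 1 * A 1 0 * C 1 1 + A 0 1 * A 1 0 * C 0 0 + A 0 0 * A 1 0 * C 0 1
      + A 0 0 * A 0 1 * C 1 0 + A 0 0 ^ 2 * C 0 0) * hB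
end

section
/- Define F : ℂ³ → ℂ by F(x,y,z) = x² + y² + z² − x·y·z − 2. For every t ∈ ℂ with t ≠ 2 and t ≠ −2, the affine surface {F = t} is smooth: for every (x,y,z) ∈ ℂ³ with F(x,y,z) = t, the gradient (2x − yz, 2y − xz, 2z − xy) is nonzero. -/
/-- For `t ≠ ±2`, the surface `{x² + y² + z² − xyz − 2 = t} ⊂ ℂ³` is smooth:
the gradient `(2x − yz, 2y − xz, 2z − xy)` never vanishes on it. -/
theorem surface_smooth (t : ℂ) (ht : t ≠ 2) (ht' : t ≠ -2) (x y z : ℂ)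
    (h : x ^ 2 + y ^ 2 + z ^ 2 - x * y * z - 2 = t) :
    ¬(2 * x - y * z = 0 ∧ 2 * y - x * z = 0 ∧ 2 * z - x * y = 0) := by
  rintro ⟨h1, h2, h3⟩
  have e1 : x ^ 2 = z ^ 2 := by linear_combination (x / 2) * h1 - (z / 2) * h3
  have e2 : y ^ 2 = z ^ 2 := by linear_combination (y / 2) * h2 - (z / 2) * h3
  have e3 : x * y * z = 2 * z ^ 2 := by linear_combination (-z) * h3
  have ht2 : t = z ^ 2 - 2 := by linear_combination -h + e1 + e2 - e3
  have k : (x * y * z) ^ 2 = 8 * (x * y * z) := by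
    linear_combination (-(x * z) * (x * y)) * h1 + (-(2 * x) * (x * y)) * h2 +
      (-(4 * x) * y) * h3
  have k2 : z ^ 2 * (z ^ 2 - 4) = 0 := by linear_combination k / 4 + (2 - z ^ 2 / 2 - (x * y * z) / 4) * e3
  rcases mul_eq_zero.mp k2 with hz | hz
  · exact ht' (by rw [ht2, hz]; ring)
  · exact ht (by rw [ht2, sub_eq_zero.mp hz]; ring)
end

section
/- Define F : ℂ³ → ℂ by F(x,y,z) = x² + y² + z² − x·y·z − 2. The set of singular points of the surface {F = 2}, that is, the set of (x,y,z) ∈ ℂ³ with F(x,y,z) = 2 and 2x − yz = 2y − xz = 2z − xy = 0, equals exactly {(2,2,2), (2,−2,−2), (−2,2,−2), (−2,−2,2)}; moreover at each of these four points the Hessian matrix of F, namely [[2, −z, −y], [−z, 2, −x], [−y, −x, 2]], has nonzero determinant, so each singular point is an ordinary double point. -/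
/-!
The surface `x² + y² + z² − xyz = 4` is Cayley's nodal cubic. At a singular point the gradient
equations give `xyz = 2x² = 2y² = 2z²`, and substituting this into the equation of the surface
leaves `x² = y² = z² = 4`; the relation `2z = xy` then fixes the sign of `z` from those of `x`
and `y`. The Hessian determinant equals `8 − 2(x² + y² + z²) − 2xyz`, which is `−32` at every
singular point.
-/

namespace CayleyCubic

variable {R : Type*} [CommRing R]

def IsSingularPoint (x y z : R) : Prop :=
  x ^ 2 + y ^ 2 + z ^ 2 - x * y * z - 2 = 2 ∧
    2 * x - y * z = 0 ∧ 2 * y - x * z = 0 ∧ 2 * z - x * y = 0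

theorem hessian_det (x y z : R) :
    (!![2, -z, -y; -z, 2, -x; -y, -x, 2] : Matrix (Fin 3) (Fin 3) R).det =
      8 - 2 * (x ^ 2 + y ^ 2 + z ^ 2) - 2 * (x * y * z) := by
  simp only [Matrix.det_fin_three, Matrix.of_apply, Matrix.cons_val', Matrix.cons_val_zero,
    Matrix.cons_val_one, Matrix.cons_val_two, Matrix.empty_val', Matrix.cons_val_fin_one,
    Matrix.head_cons, Matrix.tail_cons, Matrix.head_fin_const]
  ring

variable [IsDomain R]

theorem eq_two_or_eq_neg_two_of_sq_eq_four {x : R} (h : x ^ 2 = 4) : x = 2 ∨ x = -2 :=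
  sq_eq_sq_iff_eq_or_eq_neg.mp (h.trans (by norm_num))

variable [NeZero (2 : R)]

namespace IsSingularPoint

variable {x y z : R}

theorem sq_eq_four (h : IsSingularPoint x y z) : x ^ 2 = 4 ∧ y ^ 2 = 4 ∧ z ^ 2 = 4 := by
  obtain ⟨hF, hx, hy, hz⟩ := h
  refine ⟨mul_left_cancel₀ two_ne_zero ?_, mul_left_cancel₀ two_ne_zero ?_,
    mul_left_cancel₀ two_ne_zero ?_⟩
  · linear_combination 2 * hF - y * hy - z * hz
  · linear_combination 2 * hF - x * hx - z * hz
  · linear_combination 2 * hF - x * hx - y * hy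

theorem mul_mul_eq_eight (h : IsSingularPoint x y z) : x * y * z = 8 := by
  linear_combination -x * h.2.1 + 2 * h.sq_eq_four.1

theorem hessian_det_eq (h : IsSingularPoint x y z) :
    (!![2, -z, -y; -z, 2, -x; -y, -x, 2] : Matrix (Fin 3) (Fin 3) R).det = -32 := by
  obtain ⟨hx, hy, hz⟩ := h.sq_eq_four
  rw [hessian_det, hx, hy, hz, h.mul_mul_eq_eight]
  ring

theorem hessian_det_ne_zero (h : IsSingularPoint x y z) :
    (!![2, -z, -y; -z, 2, -x; -y, -x, 2] : Matrix (Fin 3) (Fin 3) R).det ≠ 0 := by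
  rw [h.hessian_det_eq, show (-32 : R) = -2 ^ 5 by norm_num]
  exact neg_ne_zero.mpr (pow_ne_zero 5 two_ne_zero)

end IsSingularPoint

theorem isSingularPoint_iff (x y z : R) :
    IsSingularPoint x y z ↔
      (x, y, z) = (2, 2, 2) ∨ (x, y, z) = (2, -2, -2) ∨ (x, y, z) = (-2, 2, -2) ∨
        (x, y, z) = (-2, -2, 2) := by
  constructor
  · intro h
    obtain ⟨hx, hy, -⟩ := h.sq_eq_four
    have hz (c : R) (hc : x * y = 2 * c) : z = c :=
      mul_left_cancel₀ two_ne_zero (by linear_combination h.2.2.2 + hc)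
    rcases eq_two_or_eq_neg_two_of_sq_eq_four hx with rfl | rfl <;>
      rcases eq_two_or_eq_neg_two_of_sq_eq_four hy with rfl | rfl
    · exact Or.inl (by rw [hz 2 (by ring)])
    · exact Or.inr (Or.inl (by rw [hz (-2) (by ring)]))
    · exact Or.inr (Or.inr (Or.inl (by rw [hz (-2) (by ring)])))
    · exact Or.inr (Or.inr (Or.inr (by rw [hz 2 (by ring)])))
  · rintro (h | h | h | h) <;> obtain ⟨rfl, rfl, rfl⟩ := Prod.ext_iff.mp h <;>
      norm_num [IsSingularPoint]

end CayleyCubic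

/-- The singular points of the surface `{x² + y² + z² − xyz − 2 = 2} ⊂ ℂ³` are exactly
`(2,2,2), (2,−2,−2), (−2,2,−2), (−2,−2,2)`, and at each of them the Hessian
`[[2,−z,−y],[−z,2,−x],[−y,−x,2]]` of `F` has nonzero determinant (ordinary double points). -/
theorem singular_points_t2 :
    {p : ℂ × ℂ × ℂ |
        p.1 ^ 2 + p.2.1 ^ 2 + p.2.2 ^ 2 - p.1 * p.2.1 * p.2.2 - 2 = 2 ∧
        2 * p.1 - p.2.1 * p.2.2 = 0 ∧
        2 * p.2.1 - p.1 * p.2.2 = 0 ∧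
        2 * p.2.2 - p.1 * p.2.1 = 0}
      = {(2, 2, 2), (2, -2, -2), (-2, 2, -2), (-2, -2, 2)} ∧
    ∀ p ∈ ({(2, 2, 2), (2, -2, -2), (-2, 2, -2), (-2, -2, 2)} : Set (ℂ × ℂ × ℂ)),
      (!![2, -p.2.2, -p.2.1; -p.2.2, 2, -p.1; -p.2.1, -p.1, 2] :
          Matrix (Fin 3) (Fin 3) ℂ).det ≠ 0 := by
  have singular_set : {p : ℂ × ℂ × ℂ | CayleyCubic.IsSingularPoint p.1 p.2.1 p.2.2} =
      {(2, 2, 2), (2, -2, -2), (-2, 2, -2), (-2, -2, 2)} :=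
    Set.ext fun ⟨x, y, z⟩ => CayleyCubic.isSingularPoint_iff x y z
  refine ⟨singular_set, fun p hp => ?_⟩
  rw [← singular_set] at hp
  exact CayleyCubic.IsSingularPoint.hessian_det_ne_zero hp
end
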